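/- arXiv:1210.4064 — 6 statements merged into one kernel-verified Lean document; each statement's English description precedes it below -/
import Mathlib

section
/- For partitions λ of n and μ of n−k, one has μ ∪ {k} ≤ λ in the dominance order if and only if k ≤ λ₁ and μ ≤ Bᵏ(λ), where Bᵏ(λ) is the partition of n−k obtained from λ as follows: if λᵢ ≥ k > λᵢ₊₁, remove the parts λᵢ and λᵢ₊₁ and insert the part λᵢ + λᵢ₊₁ − k. -/
/-- `l` represents a partition of `n`: weakly decreasing, supported on indices `< n`,
with parts summing to `n` (we set `λ_j = 0` beyond the length of the partition). -/
def IsPartition (n : ℕ) (l : ℕ → ℕ) : Prop :=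
  (∀ i j, i ≤ j → l j ≤ l i) ∧ (∀ i, n ≤ i → l i = 0) ∧ ∑ i ∈ Finset.range n, l i = n

/-- Dominance order: every partial sum of `a` is at most the corresponding one of `b`. -/
def Dom (a b : ℕ → ℕ) : Prop :=
  ∀ k, ∑ i ∈ Finset.range k, a i ≤ ∑ i ∈ Finset.range k, b i

/-- Multiplicity of the part `p` among the first `N` parts. -/
def mult (N : ℕ) (l : ℕ → ℕ) (p : ℕ) : ℕ :=
  ((Finset.range N).filter fun i => l i = p).card

/-- `Bk l k i` : the partition obtained from `l` (with `l i ≥ k > l (i+1)`) by removing the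
parts `l i` and `l (i+1)` and inserting the part `l i + l (i+1) - k`. -/
def Bk (l : ℕ → ℕ) (k i : ℕ) : ℕ → ℕ := fun j =>
  if j < i then l j else if j = i then l i + l (i + 1) - k else l (j + 1)

open Finset

lemma nat_eq_of_le_iff {a b : ℕ} (h : ∀ p, 1 ≤ p → (p ≤ a ↔ p ≤ b)) : a = b := by
  have h1 : a ≤ b := by
    rcases Nat.eq_zero_or_pos a with h0 | h0
    · omega
    · exact (h a h0).mp le_rfl
  have h2 : b ≤ a := by
    rcases Nat.eq_zero_or_pos b with h0 | h0
    · omega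
    · exact (h b h0).mpr le_rfl
  omega

/-- count of indices `< n` with part at least `p` -/
def cnt (n : ℕ) (l : ℕ → ℕ) (p : ℕ) : ℕ := ((Finset.range n).filter fun i => p ≤ l i).card

lemma cnt_mono (n : ℕ) (l : ℕ → ℕ) {p q : ℕ} (h : p ≤ q) : cnt n l q ≤ cnt n l p := by
  apply Finset.card_le_card
  intro x hx
  simp only [Finset.mem_filter, Finset.mem_range] at hx ⊢
  exact ⟨hx.1, le_trans h hx.2⟩

lemma mem_iff_lt_cnt (n : ℕ) (l : ℕ → ℕ) (hmono : ∀ i j, i ≤ j → l j ≤ l i)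
    (hsupp : ∀ i, n ≤ i → l i = 0) (p : ℕ) (hp : 1 ≤ p) (j : ℕ) :
    p ≤ l j ↔ j < cnt n l p := by
  constructor
  · intro h
    have hjn : j < n := by
      by_contra hc
      have := hsupp j (by omega)
      omega
    have hsub : Finset.range (j + 1) ⊆ (Finset.range n).filter fun i => p ≤ l i := by
      intro x hx
      simp only [Finset.mem_range] at hx
      simp only [Finset.mem_filter, Finset.mem_range]
      exact ⟨by omega, le_trans h (hmono x j (by omega))⟩
    have := Finset.card_le_card hsub
    simp only [Finset.card_range] at this
    unfold cnt
    omega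
  · intro h
    by_contra hc
    push_neg at hc
    have hsub : ((Finset.range n).filter fun i => p ≤ l i) ⊆ Finset.range j := by
      intro x hx
      simp only [Finset.mem_filter, Finset.mem_range] at hx ⊢
      by_contra hxj
      push_neg at hxj
      have := hmono j x hxj
      omega
    have := Finset.card_le_card hsub
    simp only [Finset.card_range] at this
    unfold cnt at h
    omega

lemma cnt_succ (n : ℕ) (l : ℕ → ℕ) (p : ℕ) :
    cnt n l p = cnt n l (p + 1) + mult n l p := by
  classical
  unfold cnt mult
  rw [Finset.card_filter, Finset.card_filter, Finset.card_filter, ← Finset.sum_add_distrib]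
  apply Finset.sum_congr rfl
  intro i _
  by_cases h1 : p + 1 ≤ l i <;> by_cases h2 : l i = p <;> simp [h1, h2] <;> omega

lemma cnt_zero_of_big (n : ℕ) (l : ℕ → ℕ) (p : ℕ) (hb : ∀ i, l i ≤ n) (hp : n < p) :
    cnt n l p = 0 := by
  unfold cnt
  rw [Finset.card_eq_zero, Finset.filter_eq_empty_iff]
  intro i _
  have := hb i
  omega

lemma cnt_rel (n k : ℕ) (hk : 1 ≤ k) (hkn : k ≤ n) (m ν : ℕ → ℕ)
    (hbν : ∀ i, ν i ≤ n) (hbm : ∀ i, m i ≤ n)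
    (hins : ∀ p, 0 < p → mult n ν p = mult n m p + if p = k then 1 else 0) :
    ∀ p, 1 ≤ p → cnt n ν p = cnt n m p + if p ≤ k then 1 else 0 := by
  have key : ∀ q p, 1 ≤ p → n + 1 ≤ p + q →
      cnt n ν p = cnt n m p + if p ≤ k then 1 else 0 := by
    intro q
    induction q with
    | zero =>
      intro p hp hnp
      rw [cnt_zero_of_big n ν p hbν (by omega), cnt_zero_of_big n m p hbm (by omega),
        if_neg (by omega)]
    | succ q ih =>
      intro p hp hnp
      by_cases hcase : n + 1 ≤ p + q
      · exact ih p hp hcase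
      · have h1 := cnt_succ n ν p
        have h2 := cnt_succ n m p
        have h3 := ih (p + 1) (by omega) (by omega)
        have h4 := hins p (by omega)
        rw [h1, h2, h4, h3]
        split_ifs <;> omega
  intro p hp
  exact key (n + 1) p hp (by omega)

lemma struct (n k : ℕ) (hk : 1 ≤ k) (hkn : k ≤ n) (m ν : ℕ → ℕ)
    (hm0 : ∀ i j, i ≤ j → m j ≤ m i) (hm1 : ∀ i, n - k ≤ i → m i = 0)
    (hm2 : ∑ i ∈ Finset.range (n - k), m i = n - k)
    (hν0 : ∀ i j, i ≤ j → ν j ≤ ν i) (hν1 : ∀ i, n ≤ i → ν i = 0)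
    (hν2 : ∑ i ∈ Finset.range n, ν i = n)
    (hins : ∀ p, 0 < p → mult n ν p = mult n m p + if p = k then 1 else 0) :
    ∃ r, (∀ j, j < r → ν j = m j) ∧ ν r = k ∧ ∀ j, r < j → ν j = m (j - 1) := by
  have hmsupp : ∀ i, n ≤ i → m i = 0 := fun i hi => hm1 i (by omega)
  have hbν : ∀ i, ν i ≤ n := by
    intro i
    have h0 : ν 0 ≤ n := by
      rw [← hν2]
      exact Finset.single_le_sum (f := ν) (fun j _ => Nat.zero_le _)
        (Finset.mem_range.mpr (by omega))
    exact le_trans (hν0 0 i (by omega)) h0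
  have hbm : ∀ i, m i ≤ n := by
    intro i
    rcases Nat.eq_zero_or_pos (n - k) with h0 | h0
    · rw [hm1 i (by omega)]; omega
    · have h1 : m 0 ≤ n - k := by
        rw [← hm2]
        exact Finset.single_le_sum (f := m) (fun j _ => Nat.zero_le _)
          (Finset.mem_range.mpr (by omega))
      have := le_trans (hm0 0 i (by omega)) h1
      omega
  have hrel := cnt_rel n k hk hkn m ν hbν hbm hins
  have hνiff : ∀ p, 1 ≤ p → ∀ j,
      (p ≤ ν j ↔ j < cnt n m p + if p ≤ k then 1 else 0) := by
    intro p hp j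
    rw [mem_iff_lt_cnt n ν hν0 hν1 p hp j, hrel p hp]
  have hmiff : ∀ p, 1 ≤ p → ∀ j, (p ≤ m j ↔ j < cnt n m p) :=
    fun p hp j => mem_iff_lt_cnt n m hm0 hmsupp p hp j
  refine ⟨cnt n m k, ?_, ?_, ?_⟩
  · intro j hj
    apply nat_eq_of_le_iff
    intro p hp
    rw [hνiff p hp j, hmiff p hp j]
    by_cases hpk : p ≤ k
    · have := cnt_mono n m hpk
      rw [if_pos hpk]
      omega
    · rw [if_neg hpk]
      omega
  · have h1 := (hνiff k hk (cnt n m k)).mpr (by rw [if_pos le_rfl]; omega)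
    have h2 : ¬ (k + 1 ≤ ν (cnt n m k)) := by
      rw [hνiff (k + 1) (by omega) (cnt n m k), if_neg (by omega)]
      have := cnt_mono n m (show k ≤ k + 1 by omega)
      omega
    omega
  · intro j hj
    apply nat_eq_of_le_iff
    intro p hp
    rw [hνiff p hp j, hmiff p hp (j - 1)]
    by_cases hpk : p ≤ k
    · rw [if_pos hpk]
      omega
    · rw [if_neg hpk]
      have := cnt_mono n m (show k ≤ p by omega)
      omega

/-- For partitions `l` of `n` and `m` of `n - k`, the insertion `m ∪ {k}` (a partition `ν` of
`n` whose parts are those of `m` together with one extra part `k`) satisfies `ν ≤ l` in the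
dominance order iff `k ≤ l 0` and `m ≤ Bᵏ(l)`. -/
theorem dominance_insert_iff_Bk (n k : ℕ) (hk : 1 ≤ k) (hkn : k ≤ n) (l m ν : ℕ → ℕ)
    (hl : IsPartition n l) (hm : IsPartition (n - k) m) (hν : IsPartition n ν)
    (hins : ∀ p, 0 < p → mult n ν p = mult n m p + if p = k then 1 else 0) :
    Dom ν l ↔ (k ≤ l 0 ∧ ∀ i, k ≤ l i → l (i + 1) < k → Dom m (Bk l k i)) := by
  obtain ⟨hl0, hl1, hl2⟩ := hl
  obtain ⟨hm0, hm1, hm2⟩ := hm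
  obtain ⟨hν0, hν1, hν2⟩ := hν
  obtain ⟨r, hr1, hr2, hr3⟩ := struct n k hk hkn m ν hm0 hm1 hm2 hν0 hν1 hν2 hins
  have hA : ∀ t, t ≤ r → ∑ i ∈ Finset.range t, ν i = ∑ i ∈ Finset.range t, m i := by
    intro t ht
    apply Finset.sum_congr rfl
    intro j hj
    simp only [Finset.mem_range] at hj
    exact hr1 j (by omega)
  have hB : ∀ s, r ≤ s → ∑ i ∈ Finset.range (s + 1), ν i = ∑ i ∈ Finset.range s, m i + k := by
    intro s hs
    induction s, hs using Nat.le_induction with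
    | base =>
      rw [Finset.sum_range_succ, hA r le_rfl, hr2]
    | succ s hs ih =>
      have e1 := Finset.sum_range_succ ν (s + 1)
      have e2 := Finset.sum_range_succ m s
      have e3 : ν (s + 1) = m s := by
        have h := hr3 (s + 1) (by omega)
        simpa using h
      omega
  have hνr : ∀ t, t ≤ r → k ≤ ν t := by
    intro t ht
    have := hν0 t r ht
    omega
  have hνl : ∀ t, r < t → ν t ≤ k := by
    intro t ht
    have := hν0 r t (by omega)
    omega
  have hCgen : ∀ i u, u ≤ i →
      ∑ j ∈ Finset.range u, Bk l k i j = ∑ j ∈ Finset.range u, l j := by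
    intro i u hu
    apply Finset.sum_congr rfl
    intro j hj
    simp only [Finset.mem_range] at hj
    unfold Bk
    rw [if_pos (by omega)]
  have hDgen : ∀ i, k ≤ l i → ∀ s, i + 1 ≤ s →
      ∑ j ∈ Finset.range s, Bk l k i j + k = ∑ j ∈ Finset.range (s + 1), l j := by
    intro i hki s hs
    induction s, hs using Nat.le_induction with
    | base =>
      have a1 := Finset.sum_range_succ (Bk l k i) i
      have a2 := hCgen i i le_rfl
      have a3 : Bk l k i i = l i + l (i + 1) - k := by
        unfold Bk
        rw [if_neg (by omega), if_pos rfl]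
      have a4 := Finset.sum_range_succ l (i + 1)
      have a5 := Finset.sum_range_succ l i
      omega
    | succ s hs ih =>
      have a1 := Finset.sum_range_succ (Bk l k i) s
      have a2 : Bk l k i s = l (s + 1) := by
        unfold Bk
        rw [if_neg (by omega), if_neg (by omega)]
      have a3 := Finset.sum_range_succ l (s + 1)
      omega
  constructor
  · intro hDom
    have hνk0 : k ≤ ν 0 := hνr 0 (by omega)
    have hd1 := hDom 1
    simp only [Finset.sum_range_one] at hd1
    refine ⟨by omega, ?_⟩
    intro i hki hik1 t
    by_cases hti : t ≤ i
    · by_cases htr : t ≤ r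
      · have e1 := hA t htr
        have e2 := hDom t
        have e3 := hCgen i t hti
        omega
      · obtain ⟨s, rfl⟩ : ∃ s, t = s + 1 := ⟨t - 1, by omega⟩
        have e1 := hB s (by omega)
        have e2 : ν (s + 1) = m s := by
          have h := hr3 (s + 1) (by omega)
          simpa using h
        have e3 := hνl (s + 1) (by omega)
        have e4 := Finset.sum_range_succ m s
        have e6 := hDom (s + 1)
        have e7 := hCgen i (s + 1) hti
        omega
    · have hDt := hDgen i hki t (by omega)
      by_cases htr : t < r
      · have e1 := hA t (by omega)
        have e2 := Finset.sum_range_succ ν t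
        have e3 := hνr t (by omega)
        have e4 := hDom (t + 1)
        omega
      · have e1 := hB t (by omega)
        have e2 := hDom (t + 1)
        omega
  · rintro ⟨hkl0, H⟩
    have hln : l n = 0 := hl1 n le_rfl
    have hex : ∃ j, l j < k := ⟨n, by omega⟩
    have hpos : 0 < Nat.find hex := by
      rcases Nat.eq_zero_or_pos (Nat.find hex) with h | h
      · exfalso
        have hsp := Nat.find_spec hex
        rw [h] at hsp
        omega
      · exact h
    set i := Nat.find hex - 1 with hi
    have hki : k ≤ l i := by
      have h := Nat.find_min hex (m := i) (by omega)
      omega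
    have hik1 : l (i + 1) < k := by
      have h : i + 1 = Nat.find hex := by omega
      rw [h]
      exact Nat.find_spec hex
    have hB' := H i hki hik1
    intro t
    by_cases htr : t ≤ r
    · have e1 := hA t htr
      by_cases hti : t ≤ i
      · have e2 := hB' t
        have e3 := hCgen i t hti
        omega
      · have e2 := hB' t
        have e3 := hDgen i hki t (by omega)
        have e4 := Finset.sum_range_succ l t
        have e5 : l t ≤ k := by
          have h := hl0 (i + 1) t (by omega)
          omega
        omega
    · obtain ⟨s, rfl⟩ : ∃ s, t = s + 1 := ⟨t - 1, by omega⟩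
      have e1 := hB s (by omega)
      by_cases hsi : s ≤ i
      · have e2 := hB' s
        have e3 := hCgen i s hsi
        have e4 : k ≤ l s := by
          have h := hl0 s i hsi
          omega
        have e5 := Finset.sum_range_succ l s
        omega
      · have e2 := hB' s
        have e3 := hDgen i hki s (by omega)
        omega
end

section
/- The maximal element of the set of partitions of d in which every even part occurs with even multiplicity (orthogonal partitions), with respect to the dominance order, is (d−1, 1) if d is even and (d) if d is odd. -/
/-- Orthogonal partition: every (nonzero) even part occurs with even multiplicity. -/
def Orth (N : ℕ) (l : ℕ → ℕ) : Prop := ∀ p, 0 < p → Even p → Even (mult N l p)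

lemma partial_le (d : ℕ) (l : ℕ → ℕ) (hl : IsPartition d l) :
    ∀ k, ∑ i ∈ Finset.range k, l i ≤ d := by
  intro k
  rcases le_or_gt k d with h | h
  · calc ∑ i ∈ Finset.range k, l i ≤ ∑ i ∈ Finset.range d, l i :=
        Finset.sum_le_sum_of_subset (Finset.range_subset_range.2 h)
      _ = d := hl.2.2
  · have he : ∑ i ∈ Finset.range d, l i = ∑ i ∈ Finset.range k, l i := by
      apply Finset.sum_subset (Finset.range_subset_range.2 h.le)
      intro x hx hx'
      exact hl.2.1 x (by simpa using hx')
    rw [← he, hl.2.2]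

/-- The maximal orthogonal partition of `d` in the dominance order is `(d-1,1)` if `d` is
even and `(d)` if `d` is odd. -/
theorem orth_max (d : ℕ) (hd : 0 < d) (m : ℕ → ℕ)
    (hm : m = if Even d then (fun j => if j = 0 then d - 1 else if j = 1 then 1 else 0)
              else fun j => if j = 0 then d else 0) :
    IsPartition d m ∧ Orth d m ∧ ∀ l, IsPartition d l → Orth d l → Dom l m := by
  by_cases hE : Even d
  · have hd2 : 2 ≤ d := by
      rcases hE with ⟨k, hk⟩; omega
    rw [hm, if_pos hE]
    set f : ℕ → ℕ := fun j => if j = 0 then d - 1 else if j = 1 then 1 else 0 with hf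
    have hfsum : ∀ k, 2 ≤ k → ∑ i ∈ Finset.range k, f i = d := by
      intro k hk
      have h2 : ∑ i ∈ Finset.range 2, f i = ∑ i ∈ Finset.range k, f i := by
        apply Finset.sum_subset (Finset.range_subset_range.2 hk)
        intro x hx hx'
        simp only [Finset.mem_range, not_lt] at hx'
        simp only [hf]; split_ifs <;> omega
      rw [← h2]
      simp [hf, Finset.sum_range_succ]
      omega
    refine ⟨⟨?_, ?_, hfsum d hd2⟩, ?_, ?_⟩
    · intro i j hij
      simp only [hf]
      split_ifs <;> omega
    · intro i hi
      simp only [hf]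
      have : i ≠ 0 := by omega
      have : i ≠ 1 := by omega
      simp_all
    · intro p hp hpe
      have hdm : d % 2 = 0 := Nat.even_iff.1 hE
      have hpm : p % 2 = 0 := Nat.even_iff.1 hpe
      have : mult d f p = 0 := by
        unfold mult
        rw [Finset.card_eq_zero, Finset.filter_eq_empty_iff]
        intro x _
        simp only [hf]
        split_ifs <;> omega
      rw [this]; exact Even.zero
    · intro l hl horth k
      rcases Nat.lt_or_ge k 2 with hk | hk
      · interval_cases k
        · simp
        · -- k = 1 : l 0 ≤ d - 1
          have hf0 : ∑ i ∈ Finset.range 1, f i = d - 1 := by simp [hf]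
          rw [hf0, Finset.sum_range_one]
          by_contra h
          push_neg at h
          have hle1 := partial_le d l hl 1
          rw [Finset.sum_range_one] at hle1
          have h0 : l 0 = d := by omega
          have hzero : ∀ i, 1 ≤ i → l i = 0 := by
            intro i hi
            rcases le_or_gt d i with h' | h'
            · exact hl.2.1 i h'
            · have h2 := partial_le d l hl (i + 1)
              have h1 : l 0 + l i ≤ ∑ j ∈ Finset.range (i + 1), l j := by
                have hsub : ({0, i} : Finset ℕ) ⊆ Finset.range (i + 1) := by
                  intro x hx; simp at hx ⊢; omega
                calc l 0 + l i = ∑ j ∈ ({0, i} : Finset ℕ), l j := by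
                      rw [Finset.sum_pair (by omega)]
                  _ ≤ _ := Finset.sum_le_sum_of_subset hsub
              omega
          have hmult : mult d l d = 1 := by
            unfold mult
            have : (Finset.range d).filter (fun i => l i = d) = {0} := by
              ext x
              simp only [Finset.mem_filter, Finset.mem_range, Finset.mem_singleton]
              constructor
              · rintro ⟨hx, hxd⟩
                by_contra hx0
                have := hzero x (by omega)
                omega
              · rintro rfl; exact ⟨hd, h0⟩
            rw [this]; simp
          have := horth d hd hE
          rw [hmult] at this
          exact Nat.not_even_one this
      · rw [hfsum k hk]
        exact partial_le d l hl k
  · have hdm : d % 2 = 1 := Nat.odd_iff.1 (Nat.not_even_iff_odd.1 hE)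
    rw [hm, if_neg hE]
    set f : ℕ → ℕ := fun j => if j = 0 then d else 0 with hf
    have hfsum : ∀ k, 1 ≤ k → ∑ i ∈ Finset.range k, f i = d := by
      intro k hk
      have h2 : ∑ i ∈ Finset.range 1, f i = ∑ i ∈ Finset.range k, f i := by
        apply Finset.sum_subset (Finset.range_subset_range.2 hk)
        intro x hx hx'
        simp only [Finset.mem_range, not_lt] at hx'
        simp only [hf]; split_ifs <;> omega
      rw [← h2]
      simp [hf]
    refine ⟨⟨?_, ?_, hfsum d hd⟩, ?_, ?_⟩
    · intro i j hij
      simp only [hf]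
      split_ifs <;> omega
    · intro i hi
      simp only [hf]
      have : i ≠ 0 := by omega
      simp_all
    · intro p hp hpe
      have hpm : p % 2 = 0 := Nat.even_iff.1 hpe
      have : mult d f p = 0 := by
        unfold mult
        rw [Finset.card_eq_zero, Finset.filter_eq_empty_iff]
        intro x _
        simp only [hf]
        split_ifs <;> omega
      rw [this]; exact Even.zero
    · intro l hl horth k
      rcases Nat.lt_or_ge k 1 with hk | hk
      · interval_cases k; simp
      · rw [hfsum k hk]
        exact partial_le d l hl k
end

section
/- Let OM(μ) = {p > 1 : m_p(μ) is odd} for a partition μ. For every partition λ of n (orthogonal or symplectic) and every k, there exists a partition μ ≤ λ of n of the same type with |OM(μ)| ≤ 1 and μ₁ + ⋯ + μ_k = λ₁ + ⋯ + λ_k. -/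
set_option maxHeartbeats 1000000

/-- Symplectic partition: every odd part occurs with even multiplicity. -/
def Symp (N : ℕ) (l : ℕ → ℕ) : Prop := ∀ p, Odd p → Even (mult N l p)

/-- `|OM(l)| ≤ 1`: at most one part greater than `1` occurs with odd multiplicity. -/
def OMone (N : ℕ) (l : ℕ → ℕ) : Prop :=
  ∀ p q, 1 < p → 1 < q → Odd (mult N l p) → Odd (mult N l q) → p = q
namespace PLAux

/-- descending sort of a multiset -/
def dsort (M : Multiset ℕ) : List ℕ := M.sort (· ≥ ·)

lemma dsort_sorted (M : Multiset ℕ) : (dsort M).Pairwise (· ≥ ·) := Multiset.pairwise_sort _ _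
lemma dsort_coe (M : Multiset ℕ) : ((dsort M : List ℕ) : Multiset ℕ) = M := Multiset.sort_eq _ _
lemma dsort_len (M : Multiset ℕ) : (dsort M).length = Multiset.card M := by
  rw [← Multiset.coe_card, dsort_coe]

/-- In a descending sorted list, the elements `≥ q` form a prefix. -/
lemma filter_eq_take (q : ℕ) : ∀ {L : List ℕ}, L.Pairwise (· ≥ ·) →
    L.filter (fun x => decide (q ≤ x)) = L.take (L.filter (fun x => decide (q ≤ x))).length := by
  intro L
  induction L with
  | nil => simp
  | cons a L ih =>
    intro hL
    rw [List.pairwise_cons] at hL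
    by_cases h : q ≤ a
    · rw [List.filter_cons_of_pos (by simpa using h)]
      simp only [List.length_cons, List.take_succ_cons]
      rw [← ih hL.2]
    · have h0 : List.filter (fun x => decide (q ≤ x)) (a :: L) = [] := by
        rw [List.filter_eq_nil_iff]
        intro x hx
        rcases List.mem_cons.1 hx with rfl | hx
        · simpa using h
        · have := hL.1 x hx
          simp only [decide_eq_true_eq]
          omega
      rw [h0]
      simp

lemma sum_range_getD (L : List ℕ) (t : ℕ) :
    ∑ i ∈ Finset.range t, L.getD i 0 = (L.take t).sum := by
  induction t with
  | zero => simp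
  | succ t ih =>
    rw [Finset.sum_range_succ, ih, List.take_succ, List.sum_append]
    congr 1
    rw [List.getD_eq_getElem?_getD]
    cases h : L[t]? <;> simp [h]

lemma sum_take_mono (L : List ℕ) {t t' : ℕ} (h : t ≤ t') :
    (L.take t).sum ≤ (L.take t').sum := by
  rw [← sum_range_getD, ← sum_range_getD]
  exact Finset.sum_le_sum_of_subset (Finset.range_subset_range.2 h)

/-- Key: any submultiset with at most `t` elements has sum at most the top-`t` sum. -/
lemma key (L : List ℕ) (hL : L.Pairwise (· ≥ ·)) :
    ∀ (t : ℕ) (N : Multiset ℕ), N ≤ ↑L → Multiset.card N ≤ t → N.sum ≤ (L.take t).sum := by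
  intro t
  induction t with
  | zero =>
    intro N hN hc
    have : N = 0 := by
      rwa [Nat.le_zero, Multiset.card_eq_zero] at hc
    simp [this]
  | succ t ih =>
    intro N hN hc
    rcases eq_or_ne N 0 with rfl | hne
    · simp
    by_cases hct : Multiset.card N ≤ t
    · exact (ih N hN hct).trans (sum_take_mono L (Nat.le_succ t))
    have hcard : Multiset.card N = t + 1 := by omega
    have hfne : N.toFinset.Nonempty := by
      rw [Multiset.toFinset_nonempty]; exact hne
    set y := N.toFinset.min' hfne with hy
    have hymem : y ∈ N := Multiset.mem_toFinset.1 (N.toFinset.min'_mem hfne)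
    have hymin : ∀ x ∈ N, y ≤ x := fun x hx => N.toFinset.min'_le x (Multiset.mem_toFinset.2 hx)
    have hNf : Multiset.filter (fun x => y ≤ x) N = N := Multiset.filter_eq_self.2 hymin
    have hNle : N ≤ ↑(L.filter (fun x => decide (y ≤ x))) := by
      rw [← Multiset.filter_coe]
      calc N = Multiset.filter (fun x => y ≤ x) N := hNf.symm
        _ ≤ _ := Multiset.filter_le_filter _ hN
    have hclen : t + 1 ≤ (L.filter (fun x => decide (y ≤ x))).length := by
      have h1 := Multiset.card_le_card hNle
      rw [hcard] at h1
      simpa using h1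
    have htlen : t < L.length := lt_of_lt_of_le hclen (List.length_filter_le _ _)
    have hyLt : y ≤ L.getD t 0 := by
      have h2 : L[t] ∈ L.filter (fun x => decide (y ≤ x)) := by
        rw [filter_eq_take y hL]
        exact List.mem_take_iff_getElem.2 ⟨t, lt_min hclen htlen, rfl⟩
      have h3 := List.of_mem_filter h2
      rw [List.getD_eq_getElem?_getD, List.getElem?_eq_getElem htlen]
      simpa using h3
    have herase_le : N.erase y ≤ ↑L := le_trans (Multiset.erase_le y N) hN
    have hcerase : Multiset.card (N.erase y) ≤ t := by
      rw [Multiset.card_erase_of_mem hymem, hcard]; exact le_of_eq (Nat.pred_succ t)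
    have hsum : (N.erase y).sum ≤ (L.take t).sum := ih _ herase_le hcerase
    have hstep : (L.take (t + 1)).sum = (L.take t).sum + L.getD t 0 := by
      rw [← sum_range_getD, ← sum_range_getD, Finset.sum_range_succ]
    have hNsum : N.sum = y + (N.erase y).sum := by
      conv_lhs => rw [← Multiset.cons_erase hymem]
      rw [Multiset.sum_cons]
    omega

/-- Sum of the `t` largest elements of `M`. -/
def topSum (M : Multiset ℕ) (t : ℕ) : ℕ := ((dsort M).take t).sum

/-- The multiset of the `t` largest elements of `M`. -/
def topN (M : Multiset ℕ) (t : ℕ) : Multiset ℕ := (((dsort M).take t : List ℕ) : Multiset ℕ)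

lemma topN_le (M : Multiset ℕ) (t : ℕ) : topN M t ≤ M := by
  have h : ((((dsort M).take t : List ℕ)) : Multiset ℕ) ≤ ↑(dsort M) :=
    Multiset.coe_le.2 ((List.take_sublist _ _).subperm)
  rwa [dsort_coe] at h

lemma card_topN (M : Multiset ℕ) (t : ℕ) : Multiset.card (topN M t) ≤ t := by
  simp [topN]

lemma sum_topN (M : Multiset ℕ) (t : ℕ) : (topN M t).sum = topSum M t := by
  simp [topN, topSum]

lemma sum_le_topSum {M N : Multiset ℕ} {t : ℕ} (hN : N ≤ M) (hc : Multiset.card N ≤ t) :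
    N.sum ≤ topSum M t :=
  key (dsort M) (dsort_sorted M) t N (by rw [dsort_coe]; exact hN) hc

lemma dsort_coe_eq {L : List ℕ} (hL : L.Pairwise (· ≥ ·)) : dsort (↑L) = L :=
  List.Perm.eq_of_pairwise' (dsort_sorted _) hL (Multiset.coe_eq_coe.1 (dsort_coe _))

lemma topSum_coe {L : List ℕ} (hL : L.Pairwise (· ≥ ·)) (t : ℕ) :
    topSum (↑L) t = (L.take t).sum := by
  rw [topSum, dsort_coe_eq hL]

lemma msum_le {s t : Multiset ℕ} (h : s ≤ t) : s.sum ≤ t.sum := by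
  have h2 : s + (t - s) = t := add_tsub_cancel_of_le h
  calc s.sum ≤ s.sum + (t - s).sum := Nat.le_add_right _ _
    _ = t.sum := by rw [← Multiset.sum_add, h2]

lemma filter_coe_dsort (M : Multiset ℕ) (q : ℕ) :
    M.filter (fun x => q ≤ x) = ↑((dsort M).filter (fun x => decide (q ≤ x))) := by
  conv_lhs => rw [← dsort_coe M]
  rw [Multiset.filter_coe]

lemma filter_le_topN (M : Multiset ℕ) (q t : ℕ)
    (h : Multiset.card (M.filter (fun x => q ≤ x)) ≤ t) :
    M.filter (fun x => q ≤ x) ≤ topN M t := by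
  set L := dsort M with hL
  have hco := filter_coe_dsort M q
  have hc : (L.filter (fun x => decide (q ≤ x))).length ≤ t := by
    rw [hco] at h; simpa using h
  rw [hco, topN]
  apply Multiset.coe_le.2
  apply List.Sublist.subperm
  rw [filter_eq_take q (dsort_sorted M)]
  have h2 : L.take (L.filter (fun x => decide (q ≤ x))).length
      = (L.take t).take (L.filter (fun x => decide (q ≤ x))).length := by
    rw [List.take_take, min_eq_left hc]
  rw [h2]
  exact List.take_sublist _ _

lemma topSum_card_filter (M : Multiset ℕ) (q : ℕ) :
    topSum M (Multiset.card (M.filter (fun x => q ≤ x))) = (M.filter (fun x => q ≤ x)).sum := by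
  have hco := filter_coe_dsort M q
  rw [hco]
  have hcard : Multiset.card ((↑((dsort M).filter (fun x => decide (q ≤ x)))) : Multiset ℕ)
      = ((dsort M).filter (fun x => decide (q ≤ x))).length := by simp
  rw [hcard, topSum, ← filter_eq_take q (dsort_sorted M)]
  simp

/-- Generic move lemma: replacing `R` by `A` (with the exchange property) does not increase
any top-`t` sum. -/
lemma topSum_move_le (M R A : Multiset ℕ) (hR : R ≤ M)
    (hQ : ∀ Q ≤ A, ∃ Q', Q' ≤ R ∧ Multiset.card Q' ≤ Multiset.card Q ∧ Q.sum ≤ Q'.sum)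
    (t : ℕ) : topSum (M - R + A) t ≤ topSum M t := by
  set M1 := M - R + A with hM1
  set N := topN M1 t with hN
  have hNle : N ≤ M1 := topN_le _ _
  have hNc : Multiset.card N ≤ t := card_topN _ _
  set P := N ∩ (M - R) with hP
  have hPN : P ≤ N := Multiset.inter_le_left
  set E := N - P with hE
  have hPE : P + E = N := add_tsub_cancel_of_le hPN
  have hEA : E ≤ A := by
    rw [Multiset.le_iff_count]
    intro x
    have h1 : Multiset.count x N ≤ Multiset.count x (M - R) + Multiset.count x A := by
      have h2 := Multiset.count_le_of_le x hNle
      rwa [hM1, Multiset.count_add] at h2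
    rw [hE, hP, Multiset.count_sub, Multiset.count_inter]
    omega
  obtain ⟨Q', hQ'R, hQ'c, hQ's⟩ := hQ E hEA
  have hPQ : P + Q' ≤ M := by
    rw [Multiset.le_iff_count]
    intro x
    have h1 : Multiset.count x P ≤ Multiset.count x M - Multiset.count x R := by
      have h2 : P ≤ M - R := Multiset.inter_le_right
      have h3 := Multiset.count_le_of_le x h2
      rwa [Multiset.count_sub] at h3
    have h2 := Multiset.count_le_of_le x hQ'R
    have h3 := Multiset.count_le_of_le x hR
    rw [Multiset.count_add]
    omega
  have hsum : N.sum ≤ (P + Q').sum := by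
    rw [← hPE, Multiset.sum_add, Multiset.sum_add]
    omega
  have hcardPQ : Multiset.card (P + Q') ≤ t := by
    have h4 := congrArg Multiset.card hPE
    rw [Multiset.card_add] at h4
    rw [Multiset.card_add]
    omega
  calc topSum M1 t = N.sum := (sum_topN _ _).symm
    _ ≤ (P + Q').sum := hsum
    _ ≤ topSum M t := sum_le_topSum hPQ hcardPQ

/-- Strict decrease at `t = #{x ∈ M : v ≤ x}` when the move removes exactly one element `≥ v`
(namely `v` itself) and adds only elements `< v`. -/
lemma topSum_move_lt (M R A : Multiset ℕ) (v : ℕ) (hR : R ≤ M) (hv : v ∈ R)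
    (hRf : R.filter (fun x => v ≤ x) = {v}) (hA : ∀ a ∈ A, a < v) (hv1 : 1 ≤ v) :
    topSum (M - R + A) (Multiset.card (M.filter (fun x => v ≤ x)))
      < topSum M (Multiset.card (M.filter (fun x => v ≤ x))) := by
  set F0 := M.filter (fun x => v ≤ x) with hF0
  set c := Multiset.card F0 with hc
  have hvF0 : v ∈ F0 := Multiset.mem_filter.2 ⟨Multiset.mem_of_le hR hv, le_refl v⟩
  set M1 := M - R + A with hM1
  have hF1 : M1.filter (fun x => v ≤ x) = F0.erase v := by
    rw [hM1, Multiset.filter_add, Multiset.filter_sub, hRf]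
    have hAf : A.filter (fun x => v ≤ x) = 0 := by
      rw [Multiset.filter_eq_nil]
      intro a ha
      exact not_le.2 (hA a ha)
    rw [hAf, add_zero, ← hF0, Multiset.sub_singleton]
  set F1 := F0.erase v with hF1d
  have hcF1 : Multiset.card F1 + 1 = c := by
    have h1 : Multiset.card F1 = Multiset.card F0 - 1 := by
      rw [hF1d, Multiset.card_erase_of_mem hvF0, Nat.pred_eq_sub_one]
    have h2 : 1 ≤ Multiset.card F0 := by
      rw [Nat.succ_le, Multiset.card_pos_iff_exists_mem]
      exact ⟨v, hvF0⟩
    rw [hc]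
    omega
  have hsF1 : F1.sum + v = F0.sum := by
    conv_rhs => rw [← Multiset.cons_erase hvF0]
    rw [Multiset.sum_cons, ← hF1d]
    omega
  set N := topN M1 c with hNdef
  have hNle : N ≤ M1 := topN_le _ _
  have hNc : Multiset.card N ≤ c := card_topN _ _
  set Nhi := N.filter (fun x => v ≤ x) with hNhi
  set Nlo := N.filter (fun x => ¬ v ≤ x) with hNlo
  have hsplitN : Nhi + Nlo = N := Multiset.filter_add_not _ _
  have hNhiF1 : Nhi ≤ F1 := by
    rw [← hF1]
    exact Multiset.filter_le_filter _ hNle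
  have hcardhi : Multiset.card Nhi ≤ Multiset.card F1 := Multiset.card_le_card hNhiF1
  -- the high part misses `card F1 - card Nhi` elements each of size ≥ v
  have h5 : Nhi.sum + (Multiset.card F1 - Multiset.card Nhi) * v ≤ F1.sum := by
    have hsub : Nhi + (F1 - Nhi) = F1 := add_tsub_cancel_of_le hNhiF1
    have hcards : Multiset.card (F1 - Nhi) = Multiset.card F1 - Multiset.card Nhi := by
      have h6 := congrArg Multiset.card hsub
      rw [Multiset.card_add] at h6
      omega
    have hge : ∀ x ∈ F1 - Nhi, v ≤ x := by
      intro x hx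
      have h7 : x ∈ F1 := Multiset.mem_of_le (tsub_le_self) hx
      have h8 : x ∈ F0 := Multiset.mem_of_le (Multiset.erase_le _ _) h7
      exact (Multiset.mem_filter.1 h8).2
    have h9 := Multiset.card_nsmul_le_sum hge
    rw [smul_eq_mul, hcards] at h9
    have h10 := congrArg Multiset.sum hsub
    rw [Multiset.sum_add] at h10
    omega
  have h6 : Nlo.sum ≤ (Multiset.card Nlo) * (v - 1) := by
    have h7 : ∀ x ∈ Nlo, x ≤ v - 1 := by
      intro x hx
      have := (Multiset.mem_filter.1 hx).2
      omega
    have h8 := Multiset.sum_le_card_nsmul _ _ h7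
    rwa [smul_eq_mul] at h8
  have hcards2 : Multiset.card Nhi + Multiset.card Nlo = Multiset.card N := by
    have := congrArg Multiset.card hsplitN
    rwa [Multiset.card_add] at this
  have hsums2 : Nhi.sum + Nlo.sum = N.sum := by
    have := congrArg Multiset.sum hsplitN
    rwa [Multiset.sum_add] at this
  -- final arithmetic
  have hfin : N.sum + 1 ≤ F0.sum := by
    obtain ⟨w, rfl⟩ : ∃ w, v = w + 1 := ⟨v - 1, by omega⟩
    set d := Multiset.card F1 - Multiset.card Nhi with hd
    have he : Multiset.card Nlo ≤ d + 1 := by omega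
    have hb : Nlo.sum ≤ (d + 1) * w := by
      calc Nlo.sum ≤ (Multiset.card Nlo) * (w + 1 - 1) := h6
        _ = (Multiset.card Nlo) * w := by simp
        _ ≤ (d + 1) * w := Nat.mul_le_mul_right w he
    have e1 : d * (w + 1) = d * w + d := by ring
    have e2 : (d + 1) * w = d * w + w := by ring
    rw [e1] at h5
    rw [e2] at hb
    omega
  have hlast : topSum M1 c = N.sum := (sum_topN _ _).symm
  have hF0sum : topSum M c = F0.sum := by
    rw [hc, hF0]
    exact topSum_card_filter M v
  omega

/-- If `q` has a copy outside the top `k` positions, then the top-`k` multiset does not use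
all copies of `q`. -/
lemma count_topN_lt (M : Multiset ℕ) (q k : ℕ) (hq : q ∈ M)
    (h : k < Multiset.card (M.filter (fun x => q ≤ x))) :
    Multiset.count q (topN M k) < Multiset.count q M := by
  set L := dsort M with hLdef
  have hLs := dsort_sorted M
  have hcoe : (↑L : Multiset ℕ) = M := dsort_coe M
  have hcfilter := filter_coe_dsort M q
  set c := (L.filter (fun x => decide (q ≤ x))).length with hcd
  have hkc : k < c := by
    rw [hcfilter] at h
    simpa using h
  have hclen : c ≤ L.length := List.length_filter_le _ _
  have hklen : k < L.length := lt_of_lt_of_le hkc hclen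
  have hqLk : q ≤ L[k] := by
    have h2 : L[k] ∈ L.filter (fun x => decide (q ≤ x)) := by
      rw [filter_eq_take q hLs]
      exact List.mem_take_iff_getElem.2 ⟨k, lt_min hkc hklen, rfl⟩
    simpa using List.of_mem_filter h2
  have hsplit : List.count q L = List.count q (L.take k) + List.count q (L.drop k) := by
    rw [← List.count_append, List.take_append_drop]
  have hNcount : Multiset.count q (topN M k) = List.count q (L.take k) := by
    rw [topN, ← hLdef, Multiset.coe_count]
  have hMcount : Multiset.count q M = List.count q L := by
    rw [← hcoe, Multiset.coe_count]
  rcases eq_or_lt_of_le hqLk with heq | hlt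
  · have hmem : q ∈ L.drop k := by
      rw [List.drop_eq_getElem_cons hklen]
      exact heq ▸ List.mem_cons_self
    have hpos : 0 < List.count q (L.drop k) := List.count_pos_iff.2 hmem
    have hle : List.count q (L.take k) + List.count q (L.drop k) = List.count q L := hsplit.symm
    omega
  · have h0 : List.count q (L.take k) = 0 := by
      rw [List.count_eq_zero]
      intro hmem
      obtain ⟨i, hi, hiv⟩ := List.mem_take_iff_getElem.1 hmem
      have hik : i ≤ k := by omega
      have hilen : i < L.length := by omega
      have hrel : L[k] ≤ L[i] := by
        have := hLs.rel_get_of_le (a := ⟨i, hilen⟩) (b := ⟨k, hklen⟩) hik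
        simpa [List.get_eq_getElem] using this
      omega
    have hmemL : q ∈ L := by
      rw [← Multiset.mem_coe, hcoe]; exact hq
    have h1 : 0 < List.count q L := List.count_pos_iff.2 hmemL
    omega


/-! ### Bridging functions and multisets -/

lemma getD_sorted {L : List ℕ} (hL : L.Pairwise (· ≥ ·)) {i j : ℕ} (h : i ≤ j) :
    L.getD j 0 ≤ L.getD i 0 := by
  by_cases hj : j < L.length
  · have hi : i < L.length := lt_of_le_of_lt h hj
    rw [List.getD_eq_getElem?_getD, List.getElem?_eq_getElem hj,
      List.getD_eq_getElem?_getD, List.getElem?_eq_getElem hi]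
    have := hL.rel_get_of_le (a := ⟨i, hi⟩) (b := ⟨j, hj⟩) h
    simpa [List.get_eq_getElem] using this
  · rw [List.getD_eq_default _ _ (by omega : L.length ≤ j)]
    exact Nat.zero_le _

lemma map_getD_range (L : List ℕ) :
    (List.range L.length).map (fun i => L.getD i 0) = L := by
  induction L with
  | nil => simp
  | cons a L ih =>
    rw [List.length_cons, List.range_succ_eq_map, List.map_cons, List.map_map]
    have h : ((fun i => (a::L).getD i 0) ∘ Nat.succ) = (fun i => L.getD i 0) :=
      funext (fun i => List.getD_cons_succ)
    rw [h, ih]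
    simp

/-- The partition function associated to a multiset: sorted values padded by zeros. -/
def ofM (M : Multiset ℕ) : ℕ → ℕ := fun i => (dsort M).getD i 0

lemma ofM_anti (M : Multiset ℕ) : ∀ i j, i ≤ j → ofM M j ≤ ofM M i :=
  fun _ _ h => getD_sorted (dsort_sorted M) h

lemma sum_range_ofM (M : Multiset ℕ) (t : ℕ) :
    ∑ i ∈ Finset.range t, ofM M i = topSum M t := sum_range_getD _ _

lemma card_le_sum {M : Multiset ℕ} (hpos : ∀ x ∈ M, 1 ≤ x) : Multiset.card M ≤ M.sum := by
  have := Multiset.card_nsmul_le_sum hpos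
  simpa using this

lemma ofM_zero (M : Multiset ℕ) {i : ℕ} (hi : Multiset.card M ≤ i) : ofM M i = 0 := by
  apply List.getD_eq_default
  rw [dsort_len]
  exact hi

lemma topSum_eq_sum (M : Multiset ℕ) {t : ℕ} (ht : Multiset.card M ≤ t) :
    topSum M t = M.sum := by
  rw [topSum, List.take_of_length_le (by rw [dsort_len]; exact ht)]
  conv_rhs => rw [← dsort_coe M]
  simp

lemma mult_eq_count (N : ℕ) (f : ℕ → ℕ) (p : ℕ) :
    mult N f p = Multiset.count p ((Multiset.range N).map f) := by
  rw [Multiset.count_map, mult, Finset.card_def, Finset.filter_val, Finset.range_val]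
  congr 1
  apply Multiset.filter_congr
  intro x _
  exact ⟨fun h => h.symm, fun h => h.symm⟩

lemma mult_ofM (M : Multiset ℕ) (N p : ℕ) (hp : 1 ≤ p) (hN : Multiset.card M ≤ N) :
    mult N (ofM M) p = Multiset.count p M := by
  rw [mult_eq_count]
  set L := dsort M with hLdef
  have hlen : L.length = Multiset.card M := dsort_len M
  have hmap : (Multiset.range N).map (ofM M)
      = (((List.range N).map (fun i => L.getD i 0)) : List ℕ) := by
    rw [← Multiset.coe_range, Multiset.map_coe]
    rfl
  rw [hmap, Multiset.coe_count]
  have hNsplit : N = L.length + (N - L.length) := by omega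
  conv_lhs => rw [hNsplit, List.range_add]
  rw [List.map_append, List.count_append, map_getD_range]
  have h2 : List.count p (((List.range (N - L.length)).map (fun i => L.length + i)).map
      (fun i => L.getD i 0)) = 0 := by
    rw [List.count_eq_zero]
    intro hmem
    rw [List.map_map, List.mem_map] at hmem
    obtain ⟨i, _, hv⟩ := hmem
    have h3 : L.getD (L.length + i) 0 = 0 := List.getD_eq_default _ _ (by omega)
    simp only [Function.comp] at hv
    omega
  rw [h2, ← Multiset.coe_count, hLdef, dsort_coe]
  omega

/-- The multiset of (positive) parts of a partition function. -/
def Mof (n : ℕ) (l : ℕ → ℕ) : Multiset ℕ := ((Multiset.range n).map l).filter (fun x => 1 ≤ x)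

lemma pos_Mof (n : ℕ) (l : ℕ → ℕ) : ∀ x ∈ Mof n l, 1 ≤ x :=
  fun _ hx => (Multiset.mem_filter.1 hx).2

lemma count_Mof (n : ℕ) (l : ℕ → ℕ) {p : ℕ} (hp : 1 ≤ p) :
    (Mof n l).count p = mult n l p := by
  rw [Mof, Multiset.count_filter, if_pos hp, ← mult_eq_count]

lemma sum_Mof (n : ℕ) (l : ℕ → ℕ) : (Mof n l).sum = ∑ i ∈ Finset.range n, l i := by
  have h := Multiset.sum_filter_add_sum_filter_not (s := (Multiset.range n).map l)
    (p := fun x => 1 ≤ x)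
  have h0 : (((Multiset.range n).map l).filter (fun x => ¬ 1 ≤ x)).sum = 0 := by
    apply Multiset.sum_eq_zero
    intro x hx
    have := (Multiset.mem_filter.1 hx).2
    omega
  have h1 : (((Multiset.range n).map l)).sum = ∑ i ∈ Finset.range n, l i := by
    rw [Finset.sum_eq_multiset_sum, Finset.range_val]
  rw [Mof]
  omega

section MofSorted

variable (n : ℕ) (l : ℕ → ℕ)

lemma L0_sorted (hmono : ∀ i j, i ≤ j → l j ≤ l i) :
    ((List.range n).map l).Pairwise (· ≥ ·) := by
  rw [List.pairwise_map]
  exact (List.pairwise_lt_range (n := n)).imp (fun h => hmono _ _ (le_of_lt h))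

lemma Mof_coe : Mof n l = (((List.range n).map l).filter (fun x => decide (1 ≤ x)) : List ℕ) := by
  rw [Mof, ← Multiset.coe_range, Multiset.map_coe, Multiset.filter_coe]

/-- beyond the positive prefix, a sorted list is zero -/
lemma getD_eq_zero_of_filterlen {L : List ℕ} (hL : L.Pairwise (· ≥ ·)) {i : ℕ}
    (hi : (L.filter (fun x => decide (1 ≤ x))).length ≤ i) : L.getD i 0 = 0 := by
  by_cases hlen : i < L.length
  · by_contra hne
    have h1 : 1 ≤ L[i] := by
      rw [List.getD_eq_getElem?_getD, List.getElem?_eq_getElem hlen] at hne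
      simp at hne
      omega
    have hall : ∀ a ∈ L.take (i + 1), (fun x => decide (1 ≤ x)) a = true := by
      intro a ha
      obtain ⟨j, hj, hjv⟩ := List.mem_take_iff_getElem.1 ha
      have hj2 : j ≤ i := by omega
      have hjlen : j < L.length := by omega
      have : L[i] ≤ L[j] := by
        have := hL.rel_get_of_le (a := ⟨j, hjlen⟩) (b := ⟨i, hlen⟩) hj2
        simpa [List.get_eq_getElem] using this
      simp only [decide_eq_true_eq]
      omega
    have heq : (L.take (i + 1)).filter (fun x => decide (1 ≤ x)) = L.take (i + 1) :=
      List.filter_eq_self.2 hall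
    have hsub : ((L.take (i + 1)).filter (fun x => decide (1 ≤ x))).Sublist
        (L.filter (fun x => decide (1 ≤ x))) := (List.take_sublist _ _).filter _
    have hlen2 := hsub.length_le
    rw [heq, List.length_take] at hlen2
    omega
  · exact List.getD_eq_default _ _ (by omega)

lemma topSum_Mof (hmono : ∀ i j, i ≤ j → l j ≤ l i) (hsupp : ∀ i, n ≤ i → l i = 0) (t : ℕ) :
    topSum (Mof n l) t = ∑ i ∈ Finset.range t, l i := by
  set L0 := (List.range n).map l with hL0
  have hL0s : L0.Pairwise (· ≥ ·) := L0_sorted n l hmono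
  set Lf := L0.filter (fun x => decide (1 ≤ x)) with hLf
  have hLfs : Lf.Pairwise (· ≥ ·) := hL0s.filter _
  have hco : Mof n l = (Lf : Multiset ℕ) := Mof_coe n l
  rw [hco, topSum_coe hLfs]
  set c := Lf.length with hcd
  have htake : Lf = L0.take c := filter_eq_take 1 hL0s
  -- getD facts
  have hgetD : ∀ i, L0.getD i 0 = l i := by
    intro i
    by_cases hi : i < n
    · have hlen : i < L0.length := by simp [hL0, hi]
      rw [List.getD_eq_getElem?_getD, List.getElem?_eq_getElem hlen]
      simp [hL0]
    · have hlen : L0.length ≤ i := by simp [hL0]; omega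
      rw [List.getD_eq_default _ _ hlen, hsupp i (by omega)]
  have hsum0 : ∀ s : ℕ, (L0.take s).sum = ∑ i ∈ Finset.range s, l i := by
    intro s
    rw [← sum_range_getD]
    exact Finset.sum_congr rfl (fun i _ => (hgetD i))
  rw [htake, List.take_take]
  rcases le_total t c with htc | hct
  · rw [min_eq_left htc, hsum0]
  · rw [min_eq_right hct, hsum0]
    apply Finset.sum_subset (Finset.range_subset_range.2 hct)
    intro i _ hi
    rw [Finset.mem_range, not_lt] at hi
    rw [← hgetD i]
    have hi2 : (L0.filter (fun x => decide (1 ≤ x))).length ≤ i := by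
      rw [← hLf]; omega
    exact getD_eq_zero_of_filterlen hL0s hi2

end MofSorted

/-! ### Auxiliary count lemmas -/

lemma count_pair {p q : ℕ} (hne : p ≠ q) (x : ℕ) :
    Multiset.count x ({p, q} : Multiset ℕ)
      = (if x = p then 1 else 0) + (if x = q then 1 else 0) := by
  rw [Multiset.insert_eq_cons, Multiset.count_cons, Multiset.count_singleton]
  split_ifs <;> omega

lemma count_pair_same (s x : ℕ) :
    Multiset.count x ({s, s} : Multiset ℕ) = if x = s then 2 else 0 := by
  rw [Multiset.insert_eq_cons, Multiset.count_cons, Multiset.count_singleton]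
  split_ifs <;> omega

lemma sum_pair (p q : ℕ) : ({p, q} : Multiset ℕ).sum = p + q := by
  rw [Multiset.insert_eq_cons, Multiset.sum_cons, Multiset.sum_singleton]

lemma card_pair (p q : ℕ) : Multiset.card ({p, q} : Multiset ℕ) = 2 := by
  rw [Multiset.insert_eq_cons]
  simp

/-! ### The abstract main lemma -/

theorem main (n k : ℕ) (l : ℕ → ℕ) (hl : IsPartition n l)
    (Ty : Multiset ℕ → Prop) (hTyl : Ty (Mof n l))
    (Hsplit : ∀ M q, Ty M → 1 < q → Odd (Multiset.count q M) →
      ∃ A : Multiset ℕ, (∀ a ∈ A, 1 ≤ a) ∧ (∀ a ∈ A, a < q) ∧ A.sum = q ∧ Ty (M - {q} + A))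
    (Hmerge : ∀ M p q, Ty M → 1 < q → q < p → Odd (Multiset.count p M) →
      Odd (Multiset.count q M) →
      ∃ s, q ≤ s ∧ s < p ∧ s + s = p + q ∧ Ty (M - {p, q} + {s, s})) :
    ∃ m, IsPartition n m ∧ OMone n m ∧ Dom m l ∧
      (∑ i ∈ Finset.range k, m i = ∑ i ∈ Finset.range k, l i) ∧
      ∃ M : Multiset ℕ, Ty M ∧ ∀ p, 1 ≤ p → mult n m p = Multiset.count p M := by
  classical
  obtain ⟨hmono, hsupp, hsum⟩ := hl
  set X : Multiset ℕ → Prop := fun M =>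
    (∀ x ∈ M, 1 ≤ x) ∧ M.sum = n ∧ Ty M ∧
    (∀ t, topSum M t ≤ ∑ i ∈ Finset.range t, l i) ∧
    topSum M k = ∑ i ∈ Finset.range k, l i with hX
  set W : Multiset ℕ → ℕ := fun M => ∑ t ∈ Finset.range (n + 1), topSum M t with hW
  have hXl : X (Mof n l) := by
    refine ⟨pos_Mof n l, ?_, hTyl, ?_, ?_⟩
    · rw [sum_Mof]; exact hsum
    · intro t; rw [topSum_Mof n l hmono hsupp t]
    · rw [topSum_Mof n l hmono hsupp k]
  have hex : ∃ w, ∃ M, X M ∧ W M = w := ⟨W (Mof n l), Mof n l, hXl, rfl⟩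
  obtain ⟨M0, hX0, hW0⟩ := Nat.find_spec hex
  have hmin : ∀ M, X M → W M0 ≤ W M := by
    intro M hM
    rw [hW0]
    exact Nat.find_min' hex ⟨M, hM, rfl⟩
  obtain ⟨hpos0, hsum0, hTy0, hdom0, hk0⟩ := hX0
  have hcard0 : Multiset.card M0 ≤ n := by
    rw [← hsum0]; exact card_le_sum hpos0
  -- generic contradiction from a valid strictly-better move
  have hmove : ∀ (R A : Multiset ℕ) (v : ℕ), R ≤ M0 → v ∈ R →
      R.filter (fun x => v ≤ x) = {v} → (∀ a ∈ A, 1 ≤ a) → (∀ a ∈ A, a < v) → 1 ≤ v →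
      A.sum = R.sum → Ty (M0 - R + A) →
      topSum M0 k ≤ topSum (M0 - R + A) k →
      (∀ Q, Q ≤ A → ∃ Q', Q' ≤ R ∧ Multiset.card Q' ≤ Multiset.card Q ∧ Q.sum ≤ Q'.sum) →
      False := by
    intro R A v hR hvR hRf hA1 hAv hv1 hAs hTy1 htopk hQ
    set M1 := M0 - R + A with hM1
    have hMRsum : (M0 - R).sum + R.sum = M0.sum := by
      have h := congrArg Multiset.sum (tsub_add_cancel_of_le hR)
      rwa [Multiset.sum_add] at h
    have hle : ∀ t, topSum M1 t ≤ topSum M0 t := topSum_move_le M0 R A hR (fun Q hQle => hQ Q hQle)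
    have hX1 : X M1 := by
      refine ⟨?_, ?_, hTy1, ?_, ?_⟩
      · intro x hx
        rcases Multiset.mem_add.1 hx with hx | hx
        · exact hpos0 x (Multiset.mem_of_le tsub_le_self hx)
        · exact hA1 x hx
      · rw [hM1, Multiset.sum_add]
        omega
      · intro t; exact le_trans (hle t) (hdom0 t)
      · exact le_antisymm (le_trans (hle k) (le_of_eq hk0)) (by rw [← hk0]; exact htopk)
    have hstrict := topSum_move_lt M0 R A v hR hvR hRf hAv hv1
    set c := Multiset.card (M0.filter (fun x => v ≤ x)) with hcdef
    have hcn : c ≤ n := le_trans (Multiset.card_le_card (Multiset.filter_le _ _)) hcard0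
    have hWlt : W M1 < W M0 := by
      apply Finset.sum_lt_sum
      · intro i _; exact hle i
      · exact ⟨c, Finset.mem_range.2 (by omega), hstrict⟩
    have := hmin M1 hX1
    omega
  -- no two distinct parts > 1 with odd multiplicity
  have hno2 : ∀ p q, 1 < q → q < p → Odd (Multiset.count p M0) →
      Odd (Multiset.count q M0) → False := by
    intro p q hq1 hqp hop hoq
    have hcntp : 1 ≤ Multiset.count p M0 := by rcases hop with ⟨r, hr⟩; omega
    have hcntq : 1 ≤ Multiset.count q M0 := by rcases hoq with ⟨r, hr⟩; omega
    have hpmem : p ∈ M0 := Multiset.count_pos.1 (by omega)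
    have hqmem : q ∈ M0 := Multiset.count_pos.1 (by omega)
    have hpq : p ≠ q := by omega
    by_cases hcF : Multiset.card (M0.filter (fun x => q ≤ x)) ≤ k
    · -- both p and q live inside the top k positions: merge them
      obtain ⟨s, hqs, hsp, hss, hTy1⟩ := Hmerge M0 p q hTy0 hq1 hqp hop hoq
      set R : Multiset ℕ := {p, q} with hRdef
      have hRcount := count_pair hpq
      have hR : R ≤ M0 := by
        rw [Multiset.le_iff_count]
        intro x
        rw [hRcount x]
        rcases eq_or_ne x p with rfl | hxp
        · rw [if_pos rfl, if_neg hpq]; omega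
        rcases eq_or_ne x q with rfl | hxq
        · rw [if_neg hxp, if_pos rfl]; omega
        · rw [if_neg hxp, if_neg hxq]; omega
      have hRf : R.filter (fun x => p ≤ x) = {p} := by
        rw [hRdef, Multiset.insert_eq_cons, Multiset.filter_cons, Multiset.filter_singleton]
        simp [not_le.2 hqp]
      have hQex : ∀ Q, Q ≤ ({s, s} : Multiset ℕ) →
          ∃ Q', Q' ≤ R ∧ Multiset.card Q' ≤ Multiset.card Q ∧ Q.sum ≤ Q'.sum := by
        intro Q hQle
        have hall : ∀ b ∈ Q, b = s := by
          intro b hb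
          have := Multiset.mem_of_le hQle hb
          simpa using this
        have hrep : Q = Multiset.replicate (Multiset.card Q) s :=
          Multiset.eq_replicate_card.2 hall
        have hc2 : Multiset.card Q ≤ 2 := by
          have := Multiset.card_le_card hQle
          rwa [card_pair] at this
        obtain h0 | h1 | h2 : Multiset.card Q = 0 ∨ Multiset.card Q = 1 ∨ Multiset.card Q = 2 := by
          omega
        · exact ⟨0, Multiset.zero_le _, by simp, by rw [hrep, h0]; simp⟩
        · refine ⟨{p}, ?_, by simp [h1], ?_⟩
          · rw [hRdef, Multiset.insert_eq_cons]
            exact Multiset.singleton_le.2 (Multiset.mem_cons_self _ _)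
          · rw [hrep, h1]
            simp [Multiset.sum_replicate]
            omega
        · refine ⟨R, le_refl R, by rw [hRdef, card_pair, h2], ?_⟩
          · rw [hrep, h2, hRdef]
            rw [Multiset.sum_replicate, sum_pair]
            simp [smul_eq_mul]
            omega
      -- top-k sum is preserved
      set N := topN M0 k with hNdef
      have hFN : M0.filter (fun x => q ≤ x) ≤ N := filter_le_topN M0 q k hcF
      have hRF : R ≤ M0.filter (fun x => q ≤ x) := Multiset.le_filter.2 ⟨hR, by
        intro a ha
        have h5 : a = p ∨ a = q := by rw [hRdef] at ha; simpa using ha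
        omega⟩
      have hRN : R ≤ N := le_trans hRF hFN
      have hcNtop : Multiset.card N ≤ k := by rw [hNdef]; exact card_topN M0 k
      have hsNtop : N.sum = topSum M0 k := by rw [hNdef]; exact sum_topN M0 k
      have hcNR : Multiset.card (N - R) + Multiset.card R = Multiset.card N := by
        have h := congrArg Multiset.card (tsub_add_cancel_of_le hRN)
        rwa [Multiset.card_add] at h
      have hsNR : (N - R).sum + R.sum = N.sum := by
        have h := congrArg Multiset.sum (tsub_add_cancel_of_le hRN)
        rwa [Multiset.sum_add] at h
      have htopk : topSum M0 k ≤ topSum (M0 - R + {s, s}) k := by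
        have hN'le : N - R + {s, s} ≤ M0 - R + {s, s} := by
          have h6 : N ≤ M0 := by rw [hNdef]; exact topN_le M0 k
          exact add_le_add_left (tsub_le_tsub_right h6 R) _
        have h4 : Multiset.card R = 2 := by rw [hRdef, card_pair]
        have hRsum : R.sum = p + q := by rw [hRdef, sum_pair]
        have hcN' : Multiset.card (N - R + {s, s}) ≤ k := by
          rw [Multiset.card_add, card_pair]
          omega
        have hsN' : (N - R + {s, s}).sum = N.sum := by
          rw [Multiset.sum_add, sum_pair]
          omega
        calc topSum M0 k = N.sum := hsNtop.symm
          _ = (N - R + {s, s}).sum := hsN'.symm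
          _ ≤ topSum (M0 - R + {s, s}) k := sum_le_topSum hN'le hcN'
      exact hmove R {s, s} p hR
        (by rw [hRdef, Multiset.insert_eq_cons]; exact Multiset.mem_cons_self _ _) hRf
        (fun a ha => by rcases (show a = s by simpa using ha) with rfl; omega)
        (fun a ha => by rcases (show a = s by simpa using ha) with rfl; omega)
        (by omega)
        (by rw [sum_pair, sum_pair]; omega)
        hTy1 htopk hQex
    · -- q has a copy outside the top k positions: split that copy
      push_neg at hcF
      obtain ⟨A, hA1, hAv, hAs, hTy1⟩ := Hsplit M0 q hTy0 hq1 hoq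
      set R : Multiset ℕ := {q} with hRdef
      have hR : R ≤ M0 := Multiset.singleton_le.2 hqmem
      have hRf : R.filter (fun x => q ≤ x) = {q} := by
        rw [hRdef, Multiset.filter_singleton, if_pos (le_refl q)]
      have hQex : ∀ Q, Q ≤ A →
          ∃ Q', Q' ≤ R ∧ Multiset.card Q' ≤ Multiset.card Q ∧ Q.sum ≤ Q'.sum := by
        intro Q hQle
        rcases eq_or_ne Q 0 with rfl | hne
        · exact ⟨0, Multiset.zero_le _, by simp, by simp⟩
        · refine ⟨R, le_refl _, ?_, ?_⟩
          · have h1 : 0 < Multiset.card Q := Multiset.card_pos.2 hne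
            rw [hRdef, Multiset.card_singleton]
            omega
          · calc Q.sum ≤ A.sum := msum_le hQle
              _ = q := hAs
              _ = R.sum := by rw [hRdef]; simp
      have hcnt := count_topN_lt M0 q k hqmem hcF
      have htopk : topSum M0 k ≤ topSum (M0 - R + A) k := by
        have hNle1 : topN M0 k ≤ M0 - R + A := by
          rw [Multiset.le_iff_count]
          intro x
          have h1 := Multiset.count_le_of_le x (topN_le M0 k)
          rw [Multiset.count_add, Multiset.count_sub]
          have h2 : Multiset.count x R = if x = q then 1 else 0 := by
            rw [hRdef, Multiset.count_singleton]
          rcases eq_or_ne x q with rfl | hxq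
          · rw [h2, if_pos rfl]
            omega
          · rw [h2, if_neg hxq]
            omega
        calc topSum M0 k = (topN M0 k).sum := (sum_topN M0 k).symm
          _ ≤ topSum (M0 - R + A) k := sum_le_topSum hNle1 (card_topN _ _)
      exact hmove R A q hR (by rw [hRdef]; simp) hRf hA1 hAv (by omega)
        (by rw [hAs, hRdef]; simp) hTy1 htopk hQex
  have homC : ∀ p q, 1 < p → 1 < q → Odd (Multiset.count p M0) →
      Odd (Multiset.count q M0) → p = q := by
    intro p q hp hq hop hoq
    by_contra hne
    rcases Ne.lt_or_gt hne with h | h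
    · exact hno2 q p hp h hoq hop
    · exact hno2 p q hq h hop hoq
  refine ⟨ofM M0, ⟨ofM_anti M0, ?_, ?_⟩, ?_, ?_, ?_, M0, hTy0, ?_⟩
  · intro i hi
    exact ofM_zero M0 (le_trans hcard0 hi)
  · rw [sum_range_ofM, topSum_eq_sum M0 hcard0, hsum0]
  · intro p q hp hq hop hoq
    rw [mult_ofM M0 n p (by omega) hcard0] at hop
    rw [mult_ofM M0 n q (by omega) hcard0] at hoq
    exact homC p q hp hq hop hoq
  · intro t
    rw [sum_range_ofM]
    exact hdom0 t
  · rw [sum_range_ofM]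
    exact hk0
  · intro p hp
    exact mult_ofM M0 n p hp hcard0

lemma count_M1_split (M : Multiset ℕ) (q : ℕ) (A : Multiset ℕ) (x : ℕ) :
    Multiset.count x (M - {q} + A)
      = Multiset.count x M - (if x = q then 1 else 0) + Multiset.count x A := by
  rw [Multiset.count_add, Multiset.count_sub, Multiset.count_singleton]

lemma count_M1_merge (M : Multiset ℕ) (p q s : ℕ) (hpq : p ≠ q) (x : ℕ) :
    Multiset.count x (M - {p, q} + {s, s})
      = Multiset.count x M - ((if x = p then 1 else 0) + (if x = q then 1 else 0))
        + (if x = s then 2 else 0) := by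
  rw [Multiset.count_add, Multiset.count_sub, count_pair hpq, count_pair_same]

end PLAux

open PLAux in
/-- For every orthogonal (resp. symplectic) partition `l` of `n` and every `k`, there is a
partition `m ≤ l` of `n` of the same type, with at most one part `> 1` of odd multiplicity,
and with the same first `k` partial sums as `l`. -/
theorem exists_PL_with_same_partial_sums (n k : ℕ) (hk : 1 ≤ k) (l : ℕ → ℕ)
    (hl : IsPartition n l) :
    (Orth n l → ∃ m, IsPartition n m ∧ Orth n m ∧ OMone n m ∧ Dom m l ∧
      ∑ i ∈ Finset.range k, m i = ∑ i ∈ Finset.range k, l i) ∧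
    (Symp n l → ∃ m, IsPartition n m ∧ Symp n m ∧ OMone n m ∧ Dom m l ∧
      ∑ i ∈ Finset.range k, m i = ∑ i ∈ Finset.range k, l i) := by
  constructor
  · -- orthogonal case
    intro hOrth
    have hmain := main n k l hl (fun M => ∀ x, 0 < x → Even x → Even (Multiset.count x M))
      (by
        intro x hx hev
        rw [count_Mof n l (by omega : 1 ≤ x)]
        exact hOrth x hx hev)
      (by
        -- split supplier
        intro M q hTy hq hodd
        have hqodd : ¬ Even q := by
          intro hev
          rw [Nat.even_iff] at hev
          have h2 := hTy q (by omega) (Nat.even_iff.2 hev)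
          rw [Nat.even_iff] at h2
          rw [Nat.odd_iff] at hodd
          omega
        rw [Nat.not_even_iff] at hqodd
        refine ⟨{q - 2, 1, 1}, ?_, ?_, ?_, ?_⟩
        · intro a ha
          have h3 : a = q - 2 ∨ a = 1 ∨ a = 1 := by simpa using ha
          omega
        · intro a ha
          have h3 : a = q - 2 ∨ a = 1 ∨ a = 1 := by simpa using ha
          omega
        · show ({q - 2, 1, 1} : Multiset ℕ).sum = q
          rw [Multiset.insert_eq_cons, Multiset.sum_cons, sum_pair]
          omega
        · intro x hx hev
          rw [count_M1_split]
          have hxq : x ≠ q := by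
            rw [Nat.even_iff] at hev
            omega
          have hA : Multiset.count x ({q - 2, 1, 1} : Multiset ℕ) = 0 := by
            rw [Multiset.count_eq_zero]
            intro hmem
            have h3 : x = q - 2 ∨ x = 1 ∨ x = 1 := by simpa using hmem
            rw [Nat.even_iff] at hev
            omega
          rw [if_neg hxq, hA]
          have := hTy x hx hev
          rw [Nat.even_iff] at this ⊢
          omega
      )
      (by
        -- merge supplier
        intro M p q hTy hq hqp hop hoq
        have hqodd : q % 2 = 1 := by
          by_contra h
          have h2 := hTy q (by omega) (Nat.even_iff.2 (by omega))
          rw [Nat.even_iff] at h2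
          rw [Nat.odd_iff] at hoq
          omega
        have hpodd : p % 2 = 1 := by
          by_contra h
          have h2 := hTy p (by omega) (Nat.even_iff.2 (by omega))
          rw [Nat.even_iff] at h2
          rw [Nat.odd_iff] at hop
          omega
        refine ⟨(p + q) / 2, by omega, by omega, by omega, ?_⟩
        intro x hx hev
        have hxq : x ≠ q := by rw [Nat.even_iff] at hev; omega
        have hxp : x ≠ p := by rw [Nat.even_iff] at hev; omega
        rw [count_M1_merge M p q _ (by omega) x, if_neg hxp, if_neg hxq]
        have := hTy x hx hev
        rw [Nat.even_iff] at this ⊢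
        split_ifs <;> omega
      )
    obtain ⟨m, hpart, homone, hdom, hsums, M, hTyM, hcnt⟩ := hmain
    refine ⟨m, hpart, ?_, homone, hdom, hsums⟩
    intro x hx hev
    rw [hcnt x (by omega)]
    exact hTyM x hx hev
  · -- symplectic case
    intro hSymp
    have hmain := main n k l hl (fun M => ∀ x, Odd x → Even (Multiset.count x M))
      (by
        intro x hx
        have hx1 : 1 ≤ x := by rw [Nat.odd_iff] at hx; omega
        rw [count_Mof n l hx1]
        exact hSymp x hx)
      (by
        intro M q hTy hq hodd
        have hqev : q % 2 = 0 := by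
          by_contra h
          have h2 := hTy q (Nat.odd_iff.2 (by omega))
          rw [Nat.even_iff] at h2
          rw [Nat.odd_iff] at hodd
          omega
        refine ⟨{q / 2, q / 2}, ?_, ?_, ?_, ?_⟩
        · intro a ha
          have h3 : a = q / 2 ∨ a = q / 2 := by simpa using ha
          omega
        · intro a ha
          have h3 : a = q / 2 ∨ a = q / 2 := by simpa using ha
          omega
        · rw [sum_pair]; omega
        · intro x hx
          rw [count_M1_split]
          have hxq : x ≠ q := by rw [Nat.odd_iff] at hx; omega
          have hA : Multiset.count x ({q / 2, q / 2} : Multiset ℕ) = if x = q / 2 then 2 else 0 :=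
            count_pair_same _ _
          rw [if_neg hxq, hA]
          have := hTy x hx
          rw [Nat.even_iff] at this ⊢
          split_ifs <;> omega
      )
      (by
        intro M p q hTy hq hqp hop hoq
        have hqev : q % 2 = 0 := by
          by_contra h
          have h2 := hTy q (Nat.odd_iff.2 (by omega))
          rw [Nat.even_iff] at h2
          rw [Nat.odd_iff] at hoq
          omega
        have hpev : p % 2 = 0 := by
          by_contra h
          have h2 := hTy p (Nat.odd_iff.2 (by omega))
          rw [Nat.even_iff] at h2
          rw [Nat.odd_iff] at hop
          omega
        refine ⟨(p + q) / 2, by omega, by omega, by omega, ?_⟩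
        intro x hx
        have hxq : x ≠ q := by rw [Nat.odd_iff] at hx; omega
        have hxp : x ≠ p := by rw [Nat.odd_iff] at hx; omega
        rw [count_M1_merge M p q _ (by omega) x, if_neg hxp, if_neg hxq]
        have := hTy x hx
        rw [Nat.even_iff] at this ⊢
        split_ifs <;> omega
      )
    obtain ⟨m, hpart, homone, hdom, hsums, M, hTyM, hcnt⟩ := hmain
    refine ⟨m, hpart, ?_, homone, hdom, hsums⟩
    intro x hx
    have hx1 : 1 ≤ x := by rw [Nat.odd_iff] at hx; omega
    rw [hcnt x hx1]
    exact hTyM x hx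
end

section
/- Every partition λ of n that is orthogonal (every even part has even multiplicity) or symplectic (every odd part has even multiplicity) is uniquely determined by the set PL(λ) = {μ ≤ λ : |OM(μ)| ≤ 1, μ of the same type}. Equivalently: if λ, λ' are two such partitions of n of the same type with PL(λ) = PL(λ'), then λ = λ'. -/
/-!
The `k`-th partial sum of a partition `λ` is the largest `k`-th partial sum over `PL(λ)`, so
`PL(λ)` determines all partial sums of `λ`, hence `λ`. A maximiser is found by repeatedly
removing a pair of parts `a > b > 1` of odd multiplicity; the type condition forces `a ≡ b`
(mod 2). If `b` is among the `k` largest parts then so is `a`, and `a, b` are replaced by two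
copies of `(a + b) / 2`; otherwise `b` is split into `b` ones. Each move keeps the type and the
`k`-th partial sum, moves down in the dominance order and lowers the sum of squares of the parts.
-/

namespace PartitionDominance

open Multiset

def topParts (j : ℕ) (M : Multiset ℕ) : Multiset ℕ := ((M.sort (· ≥ ·)).take j : List ℕ)

def topSum (j : ℕ) (M : Multiset ℕ) : ℕ := (topParts j M).sum

lemma topParts_le (j : ℕ) (M : Multiset ℕ) : topParts j M ≤ M := by
  conv_rhs => rw [← M.sort_eq (· ≥ ·)]
  exact coe_le.2 (List.take_sublist _ _).subperm

lemma card_topParts_le (j : ℕ) (M : Multiset ℕ) : card (topParts j M) ≤ j := by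
  simp [topParts]

lemma mem_topParts_of_lt {j : ℕ} {M : Multiset ℕ} {a b : ℕ} (ha : a ∈ M)
    (hb : b ∈ topParts j M) (hba : b < a) : a ∈ topParts j M := by
  set L := M.sort (· ≥ ·)
  have hL : L.Pairwise (· ≥ ·) := pairwise_sort M _
  rw [← List.take_append_drop j L, List.pairwise_append] at hL
  have haL : a ∈ L.take j ++ L.drop j := by simpa [L] using ha
  rcases List.mem_append.1 haL with h | h
  · exact h
  · exact absurd (hL.2.2 b hb a h) (by omega)

lemma topSum_coe_of_pairwise {L : List ℕ} (hL : L.Pairwise (· ≥ ·)) (j : ℕ) :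
    topSum j L = (L.take j).sum := by
  rw [topSum, topParts, coe_sort, List.mergeSort_eq_self _ hL, sum_coe]

lemma sum_take_le_sum_take_cons {x : ℕ} {L : List ℕ} (hx : ∀ y ∈ L, y ≤ x) (j : ℕ) :
    (L.take j).sum ≤ ((x :: L).take j).sum := by
  cases j with
  | zero => simp
  | succ j =>
    rw [List.take_succ_cons, List.sum_cons, List.take_add_one, List.sum_append, add_comm x]
    gcongr
    cases h : L[j]? with
    | none => simp
    | some y => simpa using hx y (List.mem_of_getElem? h)

lemma sum_le_sum_take_of_sublist {S L : List ℕ} (hSL : S.Sublist L) (hL : L.Pairwise (· ≥ ·))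
    {j : ℕ} (hj : S.length ≤ j) : S.sum ≤ (L.take j).sum := by
  induction hSL generalizing j with
  | slnil => simp
  | cons x _ ih =>
    rw [List.pairwise_cons] at hL
    exact (ih hL.2 hj).trans (sum_take_le_sum_take_cons hL.1 j)
  | cons_cons x _ ih =>
    obtain ⟨j, rfl⟩ : ∃ j', j = j' + 1 := ⟨j - 1, by simp at hj; omega⟩
    simpa using ih (List.pairwise_cons.1 hL).2 (by simpa using hj)

lemma sum_le_topSum {A M : Multiset ℕ} {j : ℕ} (hAM : A ≤ M) (hA : card A ≤ j) :
    A.sum ≤ topSum j M := by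
  have hsub : (A.sort (· ≥ ·)).Sublist (M.sort (· ≥ ·)) :=
    List.sublist_of_subperm_of_sortedGE (by rwa [← coe_le, sort_eq, sort_eq])
      (pairwise_sort A _).sortedGE (pairwise_sort M _).sortedGE
  have := sum_le_sum_take_of_sublist hsub (pairwise_sort M _) (by simpa using hA)
  rwa [← sum_coe, sort_eq] at this

lemma topSum_replicate (i m c : ℕ) : topSum i (replicate m c) = min i m * c := by
  rw [← coe_replicate, topSum_coe_of_pairwise (List.pairwise_replicate.2 (Or.inr le_rfl)),
    List.take_replicate, List.sum_replicate, smul_eq_mul]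

lemma topSum_add_replicate_zero (j m : ℕ) (M : Multiset ℕ) :
    topSum j (M + replicate m 0) = topSum j M := by
  set L := M.sort (· ≥ ·)
  have hL : (L ++ List.replicate m 0).Pairwise (· ≥ ·) :=
    List.pairwise_append.2 ⟨pairwise_sort M _, List.pairwise_replicate.2 (Or.inr le_rfl),
      fun _ _ _ h => by simp [List.eq_of_mem_replicate h]⟩
  have hcoe : M + replicate m 0 = ((L ++ List.replicate m 0 : List ℕ) : Multiset ℕ) := by
    rw [← coe_add, sort_eq, coe_replicate]
  rw [hcoe, topSum_coe_of_pairwise hL, List.take_append, List.sum_append, List.take_replicate,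
    List.sum_replicate, smul_zero, add_zero, topSum, topParts, sum_coe]

lemma filter_pos_add_replicate_zero (M : Multiset ℕ) :
    M.filter (0 < ·) + replicate (M.count 0) 0 = M := by
  have hzero : M.filter (fun a => ¬ 0 < a) = M.filter (· = 0) := filter_congr fun a _ => by omega
  rw [← filter_eq', ← hzero, filter_add_not]

lemma topSum_filter_pos (j : ℕ) (M : Multiset ℕ) : topSum j (M.filter (0 < ·)) = topSum j M := by
  conv_rhs => rw [← filter_pos_add_replicate_zero M]
  exact (topSum_add_replicate_zero _ _ _).symm

/-- `e = 0` is the orthogonal and `e = 1` the symplectic condition. -/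
def HasEvenMult (e : ℕ) (M : Multiset ℕ) : Prop :=
  ∀ p, 0 < p → p % 2 = e % 2 → Even (M.count p)

def AtMostOneOddMult (M : Multiset ℕ) : Prop :=
  ∀ p q, 1 < p → 1 < q → Odd (M.count p) → Odd (M.count q) → p = q

section Moves

variable {e k : ℕ} {M R K : Multiset ℕ}

lemma HasEvenMult.mod_two_ne_of_odd {p : ℕ} (hM : HasEvenMult e M) (hp : 0 < p)
    (hodd : Odd (M.count p)) : p % 2 ≠ e % 2 :=
  fun hpe => Nat.not_even_iff_odd.2 hodd (hM p hp hpe)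

lemma hasEvenMult_replicate {m c : ℕ} (h : c % 2 = e % 2 → Even m) :
    HasEvenMult e (replicate m c) := by
  intro p _ hpe
  rw [count_replicate]
  split_ifs with hcp
  · exact h (hcp ▸ hpe)
  · exact Even.zero

lemma HasEvenMult.sub_add (hM : HasEvenMult e M) (hR : ∀ p ∈ R, p % 2 ≠ e % 2)
    (hK : HasEvenMult e K) : HasEvenMult e (M - R + K) := by
  intro p hp hpe
  have hRp : R.count p = 0 := count_eq_zero.2 fun h => hR p h hpe
  rw [count_add, count_sub, hRp, Nat.sub_zero]
  exact (hM p hp hpe).add (hK p hp hpe)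

lemma sum_map_sub_add (φ : ℕ → ℕ) (hRM : R ≤ M) :
    ((M - R + K).map φ).sum + (R.map φ).sum = (M.map φ).sum + (K.map φ).sum := by
  rw [← sum_add, ← map_add, add_right_comm, tsub_add_cancel_of_le hRM, map_add, sum_add]

lemma topSum_sub_add_le (hRM : R ≤ M) (hKR : ∀ i, topSum i K ≤ topSum i R) (j : ℕ) :
    topSum j (M - R + K) ≤ topSum j M := by
  set A := topParts j (M - R + K)
  set A₁ := A ∩ (M - R)
  set A₂ := A - (M - R)
  have hA : A₁ + A₂ = A := by rw [add_comm]; exact sub_add_inter A (M - R)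
  have hA₂K : A₂ ≤ K := tsub_le_iff_left.2 (topParts_le j _)
  set W := topParts (card A₂) R
  have hA₂W : A₂.sum ≤ W.sum :=
    (sum_le_topSum hA₂K le_rfl).trans (hKR _)
  have hWM : A₁ + W ≤ M := by
    calc A₁ + W ≤ M - R + R := add_le_add inter_le_right (topParts_le _ R)
      _ = M := tsub_add_cancel_of_le hRM
  have hcard : card (A₁ + W) ≤ j := by
    have hW : card W ≤ card A₂ := card_topParts_le _ R
    have hAj : card (A₁ + A₂) ≤ j := hA ▸ card_topParts_le j _
    rw [card_add] at hAj ⊢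
    omega
  calc topSum j (M - R + K) = A₁.sum + A₂.sum := by rw [← sum_add, hA]; rfl
    _ ≤ (A₁ + W).sum := by rw [sum_add]; omega
    _ ≤ topSum j M := sum_le_topSum hWM hcard

lemma topSum_le_topSum_sub_add (hRk : R ≤ topParts k M) (hcard : card K ≤ card R)
    (hsum : R.sum ≤ K.sum) : topSum k M ≤ topSum k (M - R + K) := by
  have hT := sum_map_sub_add id hRk (K := K)
  have hTR := card_sub hRk
  have hRT := card_le_card hRk
  have hTk := card_topParts_le k M
  simp only [map_id] at hT
  refine le_trans ?_
    (sum_le_topSum (add_le_add (tsub_le_tsub_right (topParts_le k M) R) le_rfl) ?_)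
  · rw [topSum]; omega
  · rw [card_add]; omega

lemma exists_step_of_replace (hM : HasEvenMult e M) (hRM : R ≤ M) (hRe : ∀ p ∈ R, p % 2 ≠ e % 2)
    (hKe : HasEvenMult e K) (hsum : K.sum = R.sum)
    (hsq : (K.map (· ^ 2)).sum < (R.map (· ^ 2)).sum) (hKR : ∀ i, topSum i K ≤ topSum i R)
    (hk : topSum k M ≤ topSum k (M - R + K)) :
    ∃ M', HasEvenMult e M' ∧ M'.sum = M.sum ∧ (M'.map (· ^ 2)).sum < (M.map (· ^ 2)).sum ∧
      (∀ j, topSum j M' ≤ topSum j M) ∧ topSum k M ≤ topSum k M' := by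
  refine ⟨M - R + K, hM.sub_add hRe hKe, ?_, ?_, topSum_sub_add_le hRM hKR, hk⟩
  · have := sum_map_sub_add id hRM (K := K)
    simp only [map_id] at this
    omega
  · have := sum_map_sub_add (· ^ 2) hRM (K := K)
    omega

end Moves

section Steps

variable {e : ℕ} {M : Multiset ℕ}

lemma exists_step (hM : HasEvenMult e M) (hOM : ¬ AtMostOneOddMult M) (k : ℕ) :
    ∃ M', HasEvenMult e M' ∧ M'.sum = M.sum ∧ (M'.map (· ^ 2)).sum < (M.map (· ^ 2)).sum ∧
      (∀ j, topSum j M' ≤ topSum j M) ∧ topSum k M ≤ topSum k M' := by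
  obtain ⟨a, b, hb, hba, ha_odd, hb_odd⟩ :
      ∃ a b, 1 < b ∧ b < a ∧ Odd (M.count a) ∧ Odd (M.count b) := by
    simp only [AtMostOneOddMult, not_forall] at hOM
    obtain ⟨p, q, hp, hq, hpo, hqo, hpq⟩ := hOM
    rcases lt_or_gt_of_ne hpq with h | h
    exacts [⟨q, p, hp, h, hqo, hpo⟩, ⟨p, q, hq, h, hpo, hqo⟩]
  have hae := hM.mod_two_ne_of_odd (by omega) ha_odd
  have hbe := hM.mod_two_ne_of_odd (by omega) hb_odd
  have haM : a ∈ M := count_pos.1 ha_odd.pos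
  have hbM : b ∈ M := count_pos.1 hb_odd.pos
  by_cases hbk : b ∈ topParts k M
  · -- `a ≡ b (mod 2)`, both having the parity opposite to `e`
    have hak := mem_topParts_of_lt haM hbk hba
    obtain ⟨d, rfl⟩ : ∃ d, a = b + 2 * d := ⟨(a - b) / 2, by omega⟩
    set R : Multiset ℕ := {b + 2 * d, b}
    set K := replicate 2 (b + d)
    have hRk : R ≤ topParts k M :=
      (cons_le_of_notMem (by simp; omega)).2 ⟨hak, singleton_le.2 hbk⟩
    refine exists_step_of_replace (R := R) (K := K) hM (hRk.trans (topParts_le k M))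
      (by simp [R]; omega) (hasEvenMult_replicate fun _ => even_two) (by simp [R, K]; ring)
      (by simp [R, K]; nlinarith) (fun i => ?_) ?_
    · have hR : R = ↑[b + 2 * d, b] := rfl
      rw [topSum_replicate, hR, topSum_coe_of_pairwise (by simp)]
      rcases i with _ | _ | i <;> simp <;> omega
    · exact topSum_le_topSum_sub_add hRk (by simp [R, K]) (by simp [R, K]; omega)
  · refine exists_step_of_replace (R := {b}) (K := replicate b 1) hM (singleton_le.2 hbM)
      (by simpa using hbe) (hasEvenMult_replicate fun h => ?_) (by simp) (by simp; nlinarith)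
      (fun i => ?_) ?_
    · exact Nat.even_iff.2 (by omega)
    · rw [topSum_replicate, ← coe_singleton, topSum_coe_of_pairwise (by simp)]
      rcases i with _ | i <;> simp
    · have hkb : topParts k M ≤ M - {b} := by
        rw [sub_singleton, ← erase_of_notMem hbk]
        exact erase_le_erase b (topParts_le k M)
      exact sum_le_topSum (hkb.trans (le_add_right _ _)) (card_topParts_le k M)

theorem exists_atMostOneOddMult (hM : HasEvenMult e M) (k : ℕ) :
    ∃ M', HasEvenMult e M' ∧ AtMostOneOddMult M' ∧ M'.sum = M.sum ∧
      (∀ j, topSum j M' ≤ topSum j M) ∧ topSum k M ≤ topSum k M' := by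
  induction hs : (M.map (· ^ 2)).sum using Nat.strong_induction_on generalizing M with
  | _ s ih =>
  by_cases hOM : AtMostOneOddMult M
  · exact ⟨M, hM, hOM, rfl, fun _ => le_rfl, le_rfl⟩
  obtain ⟨M₁, hM₁, hsum₁, hsq₁, hdom₁, hk₁⟩ := exists_step hM hOM k
  obtain ⟨M', hM', hOM', hsum', hdom', hk'⟩ := ih _ (hs ▸ hsq₁) hM₁ rfl
  exact ⟨M', hM', hOM', hsum'.trans hsum₁, fun j => (hdom' j).trans (hdom₁ j), hk₁.trans hk'⟩

end Steps

section Partitions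

variable {n e : ℕ} {f g : ℕ → ℕ} {M : Multiset ℕ}

def parts (n : ℕ) (f : ℕ → ℕ) : Multiset ℕ := (range n).map f

lemma mult_eq_count (n : ℕ) (f : ℕ → ℕ) (p : ℕ) : mult n f p = (parts n f).count p := by
  rw [mult, parts, count_map, Finset.card_def, Finset.filter_val]
  exact congrArg card (filter_congr fun _ _ => eq_comm)

lemma orth_iff_hasEvenMult : Orth n f ↔ HasEvenMult 0 (parts n f) := by
  simp only [Orth, HasEvenMult, mult_eq_count, Nat.even_iff, Nat.zero_mod]

lemma symp_iff_hasEvenMult : Symp n f ↔ HasEvenMult 1 (parts n f) := by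
  simp only [Symp, HasEvenMult, mult_eq_count, Nat.odd_iff]
  exact forall_congr' fun p => ⟨fun h _ => h, fun h hp => h (by omega) hp⟩

lemma oMone_iff_atMostOneOddMult : OMone n f ↔ AtMostOneOddMult (parts n f) := by
  simp only [OMone, AtMostOneOddMult, mult_eq_count]

lemma hasEvenMult_filter_pos : HasEvenMult e (M.filter (0 < ·)) ↔ HasEvenMult e M :=
  forall_congr' fun _ => forall_congr' fun hp => by rw [count_filter_of_pos hp]

lemma atMostOneOddMult_filter_pos : AtMostOneOddMult (M.filter (0 < ·)) ↔ AtMostOneOddMult M :=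
  forall₂_congr fun _ _ => forall₂_congr fun hp hq => by
    rw [count_filter_of_pos (by omega : 0 < _), count_filter_of_pos (by omega : 0 < _)]

lemma sum_range_eq_topSum (hf : IsPartition n f) (j : ℕ) :
    ∑ i ∈ Finset.range j, f i = topSum j (parts n f) := by
  have hL : ((List.range n).map f).Pairwise (· ≥ ·) :=
    List.pairwise_map.2 (List.pairwise_lt_range.imp fun h => hf.1 _ _ h.le)
  rw [parts, range, map_coe, topSum_coe_of_pairwise hL, ← List.map_take, List.take_range,
    ← sum_coe, ← map_coe, ← range]
  change _ = ∑ i ∈ Finset.range (min j n), f i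
  rcases le_total j n with h | h
  · rw [min_eq_left h]
  · rw [min_eq_right h]
    exact (Finset.sum_subset (Finset.range_subset_range.2 h)
      fun i _ hi => hf.2.1 i (by simpa using hi)).symm

lemma exists_isPartition_parts (hM : M.sum = n) :
    ∃ μ, IsPartition n μ ∧ (parts n μ).filter (0 < ·) = M.filter (0 < ·) := by
  set X := M.filter (0 < ·)
  have hX : X.sum = n := by
    rw [← hM]
    conv_rhs => rw [← filter_pos_add_replicate_zero M]
    simp [X]
  have hcard : card X ≤ n := by
    simpa [hX] using card_nsmul_le_sum (s := X) (a := 1) fun x hx => (mem_filter.1 hx).2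
  set L := X.sort (· ≥ ·) ++ List.replicate (n - card X) 0
  have hLn : L.length = n := by simp [L]; omega
  have hL : L.Pairwise (· ≥ ·) :=
    List.pairwise_append.2 ⟨pairwise_sort X _, List.pairwise_replicate.2 (Or.inr le_rfl),
      fun _ _ _ h => by simp [List.eq_of_mem_replicate h]⟩
  set μ : ℕ → ℕ := fun i => L.getD i 0
  have hparts : parts n μ = X + replicate (n - card X) 0 := by
    have hmap : (List.range n).map μ = L :=
      List.ext_getElem (by simp [hLn]) fun i _ h => by
        rw [List.getElem_map, List.getElem_range]
        exact List.getD_eq_getElem _ _ h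
    rw [parts, range, map_coe, hmap, ← coe_add, sort_eq, coe_replicate]
  refine ⟨μ, ⟨fun i j hij => ?_, fun i hi => List.getD_eq_default _ _ (hLn ▸ hi), ?_⟩, ?_⟩
  · show L.getD j 0 ≤ L.getD i 0
    rcases lt_or_ge j n with hj | hj
    · rw [List.getD_eq_getElem _ _ (hLn ▸ hj), List.getD_eq_getElem _ _ (by omega)]
      exact hL.sortedGE.getElem_ge_getElem_of_le hij
    · rw [List.getD_eq_default _ _ (hLn ▸ hj)]
      exact Nat.zero_le _
  · change (parts n μ).sum = n
    rw [hparts, sum_add, sum_replicate, smul_zero, add_zero, hX]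
  · rw [hparts, filter_add, (filter_eq_nil (s := replicate _ 0)).2 fun a ha => by
      simp [eq_of_mem_replicate ha], add_zero, filter_eq_self.2 fun a ha => (mem_filter.1 ha).2]

theorem exists_dominated_oMone (hf : IsPartition n f) (hfe : HasEvenMult e (parts n f))
    (k : ℕ) : ∃ μ, IsPartition n μ ∧ HasEvenMult e (parts n μ) ∧ OMone n μ ∧ Dom μ f ∧
      ∑ i ∈ Finset.range k, f i ≤ ∑ i ∈ Finset.range k, μ i := by
  obtain ⟨M, hMe, hMOM, hMsum, hMdom, hMk⟩ := exists_atMostOneOddMult hfe k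
  obtain ⟨μ, hμ, hμM⟩ := exists_isPartition_parts (hMsum.trans hf.2.2)
  have htop : ∀ j, ∑ i ∈ Finset.range j, μ i = topSum j M := fun j => by
    rw [sum_range_eq_topSum hμ, ← topSum_filter_pos, hμM, topSum_filter_pos]
  refine ⟨μ, hμ, ?_, ?_, fun j => ?_, ?_⟩
  · rwa [← hasEvenMult_filter_pos, hμM, hasEvenMult_filter_pos]
  · rwa [oMone_iff_atMostOneOddMult, ← atMostOneOddMult_filter_pos, hμM,
      atMostOneOddMult_filter_pos]
  · rw [htop, sum_range_eq_topSum hf]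
    exact hMdom j
  · rwa [htop, sum_range_eq_topSum hf]

theorem sum_range_le_of_forall_dom (hf : IsPartition n f) (hfe : HasEvenMult e (parts n f))
    (hfg : ∀ m, IsPartition n m → HasEvenMult e (parts n m) → OMone n m → Dom m f → Dom m g)
    (k : ℕ) : ∑ i ∈ Finset.range k, f i ≤ ∑ i ∈ Finset.range k, g i := by
  obtain ⟨μ, hμ, hμe, hμOM, hμf, hk⟩ := exists_dominated_oMone hf hfe k
  exact hk.trans (hfg μ hμ hμe hμOM hμf k)

end Partitions

end PartitionDominance

open PartitionDominance in
/-- An orthogonal (resp. symplectic) partition of `n` is uniquely determined by the set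
`PL(λ)` of partitions `μ ≤ λ` of the same type with `|OM(μ)| ≤ 1`: if two such partitions
of the same type dominate exactly the same such `μ`, they are equal. -/
theorem partition_determined_by_PL (n : ℕ) (T : (ℕ → ℕ) → Prop)
    (hT : T = Orth n ∨ T = Symp n) (l l' : ℕ → ℕ)
    (hl : IsPartition n l) (hl' : IsPartition n l') (hTl : T l) (hTl' : T l')
    (hPL : ∀ m, IsPartition n m → T m → OMone n m → (Dom m l ↔ Dom m l')) :
    ∀ i, l i = l' i := by
  obtain ⟨e, hTe⟩ : ∃ e, ∀ f, T f ↔ HasEvenMult e (parts n f) := by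
    rcases hT with rfl | rfl
    exacts [⟨0, fun _ => orth_iff_hasEvenMult⟩, ⟨1, fun _ => symp_iff_hasEvenMult⟩]
  have hsum : ∀ k, ∑ i ∈ Finset.range k, l i = ∑ i ∈ Finset.range k, l' i := fun k =>
    le_antisymm
      (sum_range_le_of_forall_dom hl ((hTe l).1 hTl)
        (fun m hm hme hmOM => (hPL m hm ((hTe m).2 hme) hmOM).1) k)
      (sum_range_le_of_forall_dom hl' ((hTe l').1 hTl')
        (fun m hm hme hmOM => (hPL m hm ((hTe m).2 hme) hmOM).2) k)
  intro i
  have hi := hsum (i + 1)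
  rw [Finset.sum_range_succ, Finset.sum_range_succ, hsum i] at hi
  omega
end

section
/- For the partitions λ = (7,3,1), μ = (5,5,1), ν = (7,2,2) of 11 (all orthogonal), a partition σ of 11 with |OM(σ)| ≤ 1 satisfies σ ≤ λ if and only if σ ≤ μ or σ ≤ ν. In particular λ is not determined among unions of orbit-closures by PL-data. -/
lemma sum_getD3 (a b c k : ℕ) :
    ∑ i ∈ Finset.range (k + 3), [a, b, c].getD i 0 = a + b + c := by
  induction k with
  | zero => simp [Finset.sum_range_succ]
  | succ n ih =>
    rw [show n + 1 + 3 = (n + 3) + 1 by omega, Finset.sum_range_succ, ih]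
    simp [List.getD_eq_default]

lemma dom_of_getD3 (σ : ℕ → ℕ) (hb : ∀ k, ∑ i ∈ Finset.range k, σ i ≤ 11)
    (a b c : ℕ) (habc : a + b + c = 11) (h1 : σ 0 ≤ a) (h2 : σ 0 + σ 1 ≤ a + b) :
    Dom σ (fun j => [a, b, c].getD j 0) := by
  intro k
  match k with
  | 0 => simp
  | 1 => simpa using h1
  | 2 => simpa [Finset.sum_range_succ] using h2
  | (k + 3) =>
    have := hb (k + 3)
    rw [sum_getD3]
    omega

/-- For the orthogonal partitions `λ = (7,3,1)`, `μ = (5,5,1)`, `ν = (7,2,2)` of `11`, an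
orthogonal partition `σ` of `11` with `|OM(σ)| ≤ 1` satisfies `σ ≤ λ` iff `σ ≤ μ` or
`σ ≤ ν`: so `PL(λ) = PL(μ) ∪ PL(ν)`. -/
theorem PL_union_example_O11 (σ : ℕ → ℕ) (hσ : IsPartition 11 σ)
    (ho : Orth 11 σ) (h1 : OMone 11 σ) :
    Dom σ (fun j => [7, 3, 1].getD j 0) ↔
      Dom σ (fun j => [5, 5, 1].getD j 0) ∨ Dom σ (fun j => [7, 2, 2].getD j 0) := by
  obtain ⟨hmono, hz, hsum⟩ := hσ
  have hb : ∀ k, ∑ i ∈ Finset.range k, σ i ≤ 11 := by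
    intro k
    rcases le_or_gt k 11 with h | h
    · calc ∑ i ∈ Finset.range k, σ i ≤ ∑ i ∈ Finset.range 11, σ i :=
        Finset.sum_le_sum_of_subset (Finset.range_subset_range.2 h)
      _ = 11 := hsum
    · have he : ∑ i ∈ Finset.range k, σ i = ∑ i ∈ Finset.range 11, σ i := by
        refine (Finset.sum_subset (Finset.range_subset_range.2 h.le) ?_).symm
        intro x _ hx
        exact hz x (by simpa using hx)
      rw [he, hsum]
  constructor
  · intro hd
    have hd1 : σ 0 ≤ 7 := by simpa using hd 1
    have hd2 : σ 0 + σ 1 ≤ 10 := by simpa [Finset.sum_range_succ] using hd 2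
    by_cases h5 : σ 0 ≤ 5
    · exact Or.inl (dom_of_getD3 σ hb 5 5 1 (by norm_num) h5 hd2)
    by_cases h9 : σ 0 + σ 1 ≤ 9
    · exact Or.inr (dom_of_getD3 σ hb 7 2 2 (by norm_num) hd1 h9)
    exfalso
    have h10 : σ 0 + σ 1 = 10 := by omega
    have hcase : σ 0 = 6 ∨ σ 0 = 7 := by omega
    rcases hcase with h6 | h7
    · -- σ = (6,4,...): part 6 has odd multiplicity, contradicting Orth
      have hσ1 : σ 1 = 4 := by omega
      have key : ∀ i, 1 ≤ i → σ i ≤ 4 := fun i hi => (hmono 1 i hi).trans hσ1.le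
      have hm : mult 11 σ 6 = 1 := by
        have hf : ((Finset.range 11).filter fun i => σ i = 6) = {0} := by
          ext i
          simp only [Finset.mem_filter, Finset.mem_range, Finset.mem_singleton]
          constructor
          · rintro ⟨hi, he⟩
            by_contra hne
            have := key i (by omega)
            omega
          · rintro rfl
            exact ⟨by norm_num, h6⟩
        rw [mult, hf, Finset.card_singleton]
      have := ho 6 (by norm_num) (by decide)
      rw [hm] at this
      simp at this
    · -- σ = (7,3,1,...): parts 7 and 3 both have odd multiplicity
      have hσ1 : σ 1 = 3 := by omega
      have hσ2 : σ 2 ≤ 1 := by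
        have h3 : σ 0 + σ 1 + σ 2 ≤ 11 := by
          have : ∑ i ∈ Finset.range 3, σ i ≤ 11 := hb 3
          simpa [Finset.sum_range_succ] using this
        omega
      have key1 : ∀ i, 1 ≤ i → σ i ≤ 3 := fun i hi => (hmono 1 i hi).trans hσ1.le
      have key2 : ∀ i, 2 ≤ i → σ i ≤ 1 := fun i hi => (hmono 2 i hi).trans hσ2
      have hm7 : mult 11 σ 7 = 1 := by
        have hf : ((Finset.range 11).filter fun i => σ i = 7) = {0} := by
          ext i
          simp only [Finset.mem_filter, Finset.mem_range, Finset.mem_singleton]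
          constructor
          · rintro ⟨hi, he⟩
            by_contra hne
            have := key1 i (by omega)
            omega
          · rintro rfl
            exact ⟨by norm_num, h7⟩
        rw [mult, hf, Finset.card_singleton]
      have hm3 : mult 11 σ 3 = 1 := by
        have hf : ((Finset.range 11).filter fun i => σ i = 3) = {1} := by
          ext i
          simp only [Finset.mem_filter, Finset.mem_range, Finset.mem_singleton]
          constructor
          · rintro ⟨hi, he⟩
            rcases Nat.lt_or_ge i 2 with h | h
            · interval_cases i <;> omega
            · have := key2 i h
              omega
          · rintro rfl
            exact ⟨by norm_num, hσ1⟩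
        rw [mult, hf, Finset.card_singleton]
      have := h1 7 3 (by norm_num) (by norm_num)
        (by rw [hm7]; exact odd_one) (by rw [hm3]; exact odd_one)
      omega
  · rintro (hm | hn)
    · have hd1 : σ 0 ≤ 5 := by simpa using hm 1
      have hd2 : σ 0 + σ 1 ≤ 10 := by simpa [Finset.sum_range_succ] using hm 2
      exact dom_of_getD3 σ hb 7 3 1 (by norm_num) (by omega) hd2
    · have hd1 : σ 0 ≤ 7 := by simpa using hn 1
      have hd2 : σ 0 + σ 1 ≤ 9 := by simpa [Finset.sum_range_succ] using hn 2
      exact dom_of_getD3 σ hb 7 3 1 (by norm_num) hd1 (by omega)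
end

section
/- In 𝔤𝔩(3,ℂ), identify the dual of the nilradical 𝔫 of upper-triangular matrices with the space of strictly lower-triangular matrices with entries a (position (2,1)), c (position (3,2)), b (position (3,1)) via the trace form. Let 𝔰 be the space of complex symmetric 3×3 matrices and ℛ the variety of nilpotent matrices of rank ≤ 1. Then the projection of ℛ ∩ 𝔰 to 𝔫* is the hypersurface {a²b² + a²c² + b²c² = 0}, while ℛ ∩ 𝔫̄ (𝔫̄ = strictly lower triangular matrices) is {ac = 0}. -/
/-!
A symmetric `X` with `X² = 0` has rank `≤ 1` and trace `0`, so its `2 × 2` minors vanish: with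
diagonal `p, q, r` the squared lower entries are `a² = pq`, `b² = pr`, `c² = qr`, and the quartic
equals `pqr (p + q + r) = 0`. Conversely, a zero `(a, b, c)` of the quartic is the lower part of
`w wᵀ` for an isotropic vector `w` (`wᵀ w = 0`): `w = (t/c, t/b, t/a)` with `t² = abc` when
`abc ≠ 0`, and otherwise two of `a, b, c` vanish and `w` comes from a solution of `uv = z`,
`u² + v² = 0`. A strictly lower-triangular `X` has `X²` concentrated in the entry `ca`.
-/

open Matrix

namespace Matrix

variable {K : Type*} [Field K]

theorem mul_eq_mul_of_rank_le_one {m n : Type*} [Fintype n] {A : Matrix m n K}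
    (hA : A.rank ≤ 1) (i k : m) (j l : n) : A i j * A k l = A i l * A k j := by
  by_contra h
  have hdet : (A.submatrix ![i, k] ![j, l]).det ≠ 0 := by
    rw [det_fin_two]
    simpa [sub_eq_zero] using h
  have h2 := rank_of_isUnit _ ((isUnit_iff_isUnit_det _).2 hdet.isUnit)
  have := rank_submatrix_le A ![i, k] ![j, l]
  simp only [Fintype.card_fin] at h2
  omega

theorem rank_le_one_of_mul_self_eq_zero {n : Type*} [Fintype n] {A : Matrix n n K}
    (hn : Fintype.card n ≤ 3) (hA : A * A = 0) : A.rank ≤ 1 := by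
  have := rank_add_rank_le_card_of_mul_eq_zero hA
  omega

theorem trace_eq_zero_of_mul_self_eq_zero {n : Type*} [Fintype n] [DecidableEq n]
    {A : Matrix n n K} (hA : A * A = 0) : A.trace = 0 :=
  (isNilpotent_trace_of_isNilpotent ⟨2, by rw [sq, hA]⟩).eq_zero

theorem IsSymm.lower_entries_quartic_eq_zero {X : Matrix (Fin 3) (Fin 3) K} (hs : X.IsSymm)
    (hX : X * X = 0) :
    X 1 0 ^ 2 * X 2 0 ^ 2 + X 1 0 ^ 2 * X 2 1 ^ 2 + X 2 0 ^ 2 * X 2 1 ^ 2 = 0 := by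
  have hr := rank_le_one_of_mul_self_eq_zero (by simp) hX
  have hminor (i j : Fin 3) : X i j ^ 2 = X i i * X j j := by
    have := mul_eq_mul_of_rank_le_one hr i j j i
    rw [hs.apply i j] at this
    linear_combination this
  have htrace : X 0 0 + X 1 1 + X 2 2 = 0 := by
    simpa [trace, Fin.sum_univ_three] using trace_eq_zero_of_mul_self_eq_zero hX
  linear_combination (X 2 0 ^ 2 + X 2 1 ^ 2) * hminor 1 0
    + (X 1 1 * X 0 0 + X 2 1 ^ 2) * hminor 2 0
    + (X 1 1 * X 0 0 + X 2 2 * X 0 0) * hminor 2 1 + X 0 0 * X 1 1 * X 2 2 * htrace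

theorem strictLowerTriangular_mul_self_eq_zero_iff {R : Type*} [CommRing R]
    {X : Matrix (Fin 3) (Fin 3) R} (hX : ∀ i j : Fin 3, i ≤ j → X i j = 0) :
    X * X = 0 ↔ X 1 0 * X 2 1 = 0 := by
  have hXX : X * X = of ![![0, 0, 0], ![0, 0, 0], ![X 1 0 * X 2 1, 0, 0]] := by
    ext i j
    fin_cases i <;> fin_cases j <;>
      simp [mul_apply, Fin.sum_univ_three, hX, mul_comm]
  rw [hXX, ← Matrix.ext_iff]
  refine ⟨fun h => by simpa using h 2 0, fun h i j => ?_⟩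
  fin_cases i <;> fin_cases j <;> simp [h]

end Matrix

section IsotropicVectors

variable {K : Type*} [Field K] [IsAlgClosed K]

theorem exists_isotropic_mul_eq (z : K) : ∃ u v : K, u * v = z ∧ u ^ 2 + v ^ 2 = 0 := by
  obtain ⟨i, hi⟩ := IsAlgClosed.exists_pow_nat_eq (-1 : K) two_pos
  obtain ⟨w, hw⟩ := IsAlgClosed.exists_pow_nat_eq (-i * z) two_pos
  exact ⟨i * w, w, by linear_combination i * hw - z * hi, by linear_combination w ^ 2 * hi⟩

theorem exists_isotropic_of_quartic_eq_zero {a b c : K}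
    (h : a ^ 2 * b ^ 2 + a ^ 2 * c ^ 2 + b ^ 2 * c ^ 2 = 0) :
    ∃ x y z : K, y * x = a ∧ z * x = b ∧ z * y = c ∧ x ^ 2 + y ^ 2 + z ^ 2 = 0 := by
  by_cases habc : a * b * c = 0
  · have hpair : (a = 0 ∧ b = 0) ∨ (a = 0 ∧ c = 0) ∨ (b = 0 ∧ c = 0) := by
      rcases mul_eq_zero.1 habc with hab | rfl
      · rcases mul_eq_zero.1 hab with rfl | rfl <;> simp_all <;> tauto
      · simp_all
    rcases hpair with ⟨rfl, rfl⟩ | ⟨rfl, rfl⟩ | ⟨rfl, rfl⟩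
    · obtain ⟨u, v, huv, hiso⟩ := exists_isotropic_mul_eq c
      exact ⟨0, v, u, by ring, by ring, huv, by linear_combination hiso⟩
    · obtain ⟨u, v, huv, hiso⟩ := exists_isotropic_mul_eq b
      exact ⟨v, 0, u, by ring, huv, by ring, by linear_combination hiso⟩
    · obtain ⟨u, v, huv, hiso⟩ := exists_isotropic_mul_eq a
      exact ⟨v, u, 0, huv, by ring, by ring, by linear_combination hiso⟩
  · obtain ⟨t, ht⟩ := IsAlgClosed.exists_pow_nat_eq (a * b * c) two_pos
    simp only [mul_eq_zero, not_or] at habc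
    obtain ⟨⟨ha, hb⟩, hc⟩ := habc
    refine ⟨t / c, t / b, t / a, ?_, ?_, ?_, ?_⟩ <;> field_simp
    · linear_combination ht
    · linear_combination ht
    · linear_combination ht
    · linear_combination (a ^ 2 * b ^ 2 + a ^ 2 * c ^ 2 + b ^ 2 * c ^ 2) * ht + a * b * c * h

end IsotropicVectors

/-- In `𝔤𝔩(3,ℂ)`, let `ℛ` be the variety of nilpotent matrices of rank `≤ 1`
(`rank X ≤ 1` and `X² = 0`), `𝔰` the symmetric matrices, and identify `𝔫*` with strictly
lower-triangular matrices `(a,b,c)` (entries `(2,1), (3,1), (3,2)`).  Then the projection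
of `ℛ ∩ 𝔰` to `𝔫*` is `{a²b² + a²c² + b²c² = 0}`, while `ℛ ∩ 𝔫̄ = {ac = 0}`. -/
theorem rank_one_nilpotent_projections :
    ({q : ℂ × ℂ × ℂ | ∃ X : Matrix (Fin 3) (Fin 3) ℂ,
        X.rank ≤ 1 ∧ X * X = 0 ∧ Xᵀ = X ∧
        X 1 0 = q.1 ∧ X 2 0 = q.2.1 ∧ X 2 1 = q.2.2}
      = {q : ℂ × ℂ × ℂ |
          q.1 ^ 2 * q.2.1 ^ 2 + q.1 ^ 2 * q.2.2 ^ 2 + q.2.1 ^ 2 * q.2.2 ^ 2 = 0}) ∧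
    (∀ X : Matrix (Fin 3) (Fin 3) ℂ, (∀ i j : Fin 3, i ≤ j → X i j = 0) →
      ((X.rank ≤ 1 ∧ X * X = 0) ↔ X 1 0 * X 2 1 = 0)) := by
  refine ⟨Set.ext fun ⟨a, b, c⟩ => ⟨?_, fun h => ?_⟩, fun X hX => ?_⟩
  · rintro ⟨X, -, hXX, hs, rfl, rfl, rfl⟩
    exact IsSymm.lower_entries_quartic_eq_zero hs hXX
  · obtain ⟨x, y, z, hyx, hzx, hzy, hiso⟩ := exists_isotropic_of_quartic_eq_zero h
    have hww : ![x, y, z] ⬝ᵥ ![x, y, z] = 0 := by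
      simpa [dotProduct, Fin.sum_univ_three, sq] using hiso
    refine ⟨vecMulVec ![x, y, z] ![x, y, z], rank_vecMulVec_le _ _, ?_,
      transpose_vecMulVec _ _, hyx, hzx, hzy⟩
    rw [vecMulVec_mul_vecMulVec, hww, zero_smul, vecMulVec_zero]
  · have hsq := strictLowerTriangular_mul_self_eq_zero_iff hX
    exact ⟨fun h => hsq.1 h.2,
      fun h => ⟨rank_le_one_of_mul_self_eq_zero (by simp) (hsq.2 h), hsq.2 h⟩⟩
end
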